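/- arXiv:2303.16842 — 11 statements merged into one kernel-verified Lean document; each statement's English description precedes it below -/
import Mathlib

section
/- Let β ≥ 1, C > 0, and let E : ℝ → ℝ be differentiable with [E']_{C^{0,1/β}} < (1 + 1/β)·C. Define w₀(x) = −x + C·x·|x|^{1/β} + E(x). Then w₀ is differentiable with w₀'(x) = −1 + (1 + 1/β)·C·|x|^{1/β} + E'(x), and for all x ∈ ℝ one has w₀'(x) ≥ −1 + E'(0) + ((1 + 1/β)·C − [E']_{C^{0,1/β}})·|x|^{1/β}. In particular, w₀' attains a strict global minimum at x = 0, with minimum value E'(0) − 1. -/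
open Real

lemma hd_abs_pow (α : ℝ) (hα : 0 < α) (x : ℝ) :
    HasDerivAt (fun y : ℝ => y * |y| ^ α) ((1 + α) * |x| ^ α) x := by
  rcases lt_trichotomy x 0 with hx | hx | hx
  · have h1 : HasDerivAt (fun y : ℝ => (-y) ^ ((1:ℝ) + α)) ((1+α) * (-x) ^ α * (-1)) x := by
      have := (Real.hasDerivAt_rpow_const (x := -x) (p := 1 + α)
        (Or.inl (by linarith))).comp x (hasDerivAt_neg x)
      rw [add_sub_cancel_left] at this
      exact this
    have h2 : HasDerivAt (fun y : ℝ => -((-y) ^ ((1:ℝ) + α))) ((1+α) * (-x) ^ α) x := by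
      exact h1.neg.congr_deriv (by ring)
    have heq : (fun y : ℝ => y * |y| ^ α) =ᶠ[nhds x] fun y : ℝ => -((-y) ^ ((1:ℝ)+α)) := by
      filter_upwards [Iio_mem_nhds hx] with y hy
      have hy' : y < 0 := hy
      rw [abs_of_neg hy', show (1:ℝ)+α = α+1 by ring,
        Real.rpow_add_one' (by linarith) (by positivity)]
      ring
    rw [abs_of_neg hx]
    exact h2.congr_of_eventuallyEq heq
  · subst hx
    rw [hasDerivAt_iff_tendsto_slope]
    have : (slope (fun y : ℝ => y * |y| ^ α) 0) =ᶠ[nhdsWithin 0 {(0:ℝ)}ᶜ] fun y => |y| ^ α := by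
      filter_upwards [self_mem_nhdsWithin] with y hy
      have hy0 : y ≠ 0 := hy
      rw [slope_def_field, zero_mul, sub_zero, sub_zero, mul_div_cancel_left₀ _ hy0]
    rw [Filter.tendsto_congr' this]
    have : Filter.Tendsto (fun y : ℝ => |y| ^ α) (nhds 0) (nhds (|(0:ℝ)| ^ α)) := by
      apply ContinuousAt.tendsto
      exact (Real.continuousAt_rpow_const _ _ (Or.inr hα.le)).comp (continuous_abs.continuousAt)
    simp only [abs_zero, Real.zero_rpow hα.ne', mul_zero] at this ⊢
    exact this.mono_left nhdsWithin_le_nhds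
  · have h1 : HasDerivAt (fun y : ℝ => y ^ ((1:ℝ) + α)) ((1+α) * x ^ α) x := by
      have := Real.hasDerivAt_rpow_const (x := x) (p := 1 + α) (Or.inl hx.ne')
      simpa [add_sub_cancel_left] using this
    have heq : (fun y : ℝ => y * |y| ^ α) =ᶠ[nhds x] fun y : ℝ => y ^ ((1:ℝ)+α) := by
      filter_upwards [Ioi_mem_nhds hx] with y hy
      have hy' : (0:ℝ) < y := hy
      rw [abs_of_pos hy', show (1:ℝ)+α = α+1 by ring,
        Real.rpow_add_one' hy'.le (by positivity)]
      ring
    rw [abs_of_pos hx]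
    exact h1.congr_of_eventuallyEq heq

/-- For `β ≥ 1`, `C > 0`, and a differentiable perturbation `E`
whose derivative admits a Hölder-`1/β` constant `H < (1 + 1/β)·C`, the data
`w₀ x = -x + C·x·|x|^(1/β) + E x` is differentiable with
`w₀' x = -1 + (1+1/β)·C·|x|^(1/β) + E' x`, satisfies the lower bound
`w₀' x ≥ -1 + E' 0 + ((1+1/β)·C - H)·|x|^(1/β)`, and `w₀'` attains a strict
global minimum at `x = 0` with minimum value `E' 0 - 1`. -/
theorem perturbed_data_derivative_min (β C : ℝ) (hβ : 1 ≤ β) (hC : 0 < C)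
    (E : ℝ → ℝ) (hE : Differentiable ℝ E)
    (H : ℝ) (hH : ∀ x y : ℝ, |deriv E x - deriv E y| ≤ H * |x - y| ^ (1/β))
    (hHC : H < (1 + 1/β) * C)
    (w₀ : ℝ → ℝ) (hw₀ : ∀ x : ℝ, w₀ x = -x + C * x * |x| ^ (1/β) + E x) :
    Differentiable ℝ w₀ ∧
    (∀ x : ℝ, deriv w₀ x = -1 + (1 + 1/β) * C * |x| ^ (1/β) + deriv E x) ∧
    (∀ x : ℝ, deriv w₀ x ≥ -1 + deriv E 0 + ((1 + 1/β) * C - H) * |x| ^ (1/β)) ∧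
    deriv w₀ 0 = deriv E 0 - 1 ∧
    (∀ x : ℝ, x ≠ 0 → deriv w₀ 0 < deriv w₀ x) := by
  have hβ0 : (0:ℝ) < β := lt_of_lt_of_le one_pos hβ
  have hα : (0:ℝ) < 1/β := by positivity
  have hderiv : ∀ x : ℝ, HasDerivAt w₀ (-1 + (1 + 1/β) * C * |x| ^ (1/β) + deriv E x) x := by
    intro x
    have hA : HasDerivAt (fun y : ℝ => -y) (-1 : ℝ) x := hasDerivAt_neg x
    have hB := (hd_abs_pow (1/β) hα x).const_mul C
    have hC' := (hE x).hasDerivAt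
    have h1 := (hA.add hB).add hC'
    have h2 : HasDerivAt (fun y : ℝ => -y + C * y * |y| ^ (1/β) + E y)
        (-1 + (1 + 1/β) * C * |x| ^ (1/β) + deriv E x) x := by
      refine (h1.congr_deriv (by ring)).congr_of_eventuallyEq (Filter.Eventually.of_forall fun y => ?_)
      simp only [Pi.add_apply]; ring
    exact h2.congr_of_eventuallyEq (Filter.Eventually.of_forall fun y => hw₀ y)
  have hd : ∀ x : ℝ, deriv w₀ x = -1 + (1 + 1/β) * C * |x| ^ (1/β) + deriv E x :=
    fun x => (hderiv x).deriv
  have hlb : ∀ x : ℝ, deriv w₀ x ≥ -1 + deriv E 0 + ((1 + 1/β) * C - H) * |x| ^ (1/β) := by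
    intro x
    have h := hH x 0
    rw [sub_zero] at h
    have h2 : -(H * |x| ^ (1/β)) ≤ deriv E x - deriv E 0 := neg_le_of_abs_le h
    rw [hd x]; nlinarith
  have hzero : deriv w₀ 0 = deriv E 0 - 1 := by
    rw [hd 0, abs_zero, Real.zero_rpow hα.ne', mul_zero]; ring
  refine ⟨fun x => (hderiv x).differentiableAt, hd, hlb, hzero, fun x hx => ?_⟩
  have hpos : (0:ℝ) < |x| ^ (1/β) := Real.rpow_pos_of_pos (abs_pos.mpr hx) _
  have := hlb x
  have h3 : 0 < ((1 + 1/β) * C - H) * |x| ^ (1/β) :=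
    mul_pos (sub_pos.mpr hHC) hpos
  rw [hzero]; linarith
end

section
/- Let β ≥ 1, C > 0, and let E : ℝ → ℝ be continuously differentiable with E'(0) < 1 and [E']_{C^{0,1/β}} < (1 + 1/β)·C. Define w₀(x) = −x + C·x·|x|^{1/β} + E(x), T₊ := 1/(1 − E'(0)), y₊ := E(0)/(1 − E'(0)), and F(x) := x + T₊·w₀(x). Then F is differentiable with F'(x) ≥ T₊·((1 + 1/β)·C − [E']_{C^{0,1/β}})·|x|^{1/β} ≥ 0 for all x, F is a strictly increasing bijection of ℝ onto ℝ, and sgn(F(x) − y₊) = sgn(x) for all x ∈ ℝ. -/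
open Real

/-- With `β ≥ 1`, `C > 0`, `E` continuously differentiable,
`E' 0 < 1` and Hölder-`1/β` constant `H < (1+1/β)·C` for `E'`, the map
`F x = x + Tstar · w₀ x` (with `w₀ x = -x + C·x·|x|^(1/β) + E x`,
`Tstar = 1/(1 - E' 0)`, `ystar = E 0/(1 - E' 0)`) is differentiable with
`F' x ≥ Tstar·((1+1/β)·C - H)·|x|^(1/β) ≥ 0`, is a strictly increasing
bijection of `ℝ` onto `ℝ`, and `sgn (F x - ystar) = sgn x` for all `x`. -/
theorem blowup_time_flow_map_bijective (β C : ℝ) (hβ : 1 ≤ β) (hC : 0 < C)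
    (E : ℝ → ℝ) (hE : ContDiff ℝ 1 E) (hE0 : deriv E 0 < 1)
    (H : ℝ) (hH : ∀ x y : ℝ, |deriv E x - deriv E y| ≤ H * |x - y| ^ (1/β))
    (hHC : H < (1 + 1/β) * C)
    (w₀ F : ℝ → ℝ) (Tstar ystar : ℝ)
    (hw₀ : ∀ x : ℝ, w₀ x = -x + C * x * |x| ^ (1/β) + E x)
    (hT : Tstar = 1 / (1 - deriv E 0)) (hy : ystar = E 0 / (1 - deriv E 0))
    (hF : ∀ x : ℝ, F x = x + Tstar * w₀ x) :
    Differentiable ℝ F ∧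
    (∀ x : ℝ, deriv F x ≥ Tstar * ((1 + 1/β) * C - H) * |x| ^ (1/β)) ∧
    (∀ x : ℝ, 0 ≤ Tstar * ((1 + 1/β) * C - H) * |x| ^ (1/β)) ∧
    StrictMono F ∧ Function.Bijective F ∧
    (∀ x : ℝ, Real.sign (F x - ystar) = Real.sign x) := by
  have hβ0 : (0:ℝ) < β := lt_of_lt_of_le one_pos hβ
  have hδpos : 0 < 1/β := by positivity
  have h1E : 0 < 1 - deriv E 0 := by linarith
  have hTpos : 0 < Tstar := by rw [hT]; positivity
  have hTE : Tstar * (1 - deriv E 0) = 1 := by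
    rw [hT]; field_simp
  have hEdiff : Differentiable ℝ E := hE.differentiable one_ne_zero
  -- derivative of x ↦ x * |x|^(1/β)
  have hg : ∀ x : ℝ, HasDerivAt (fun y : ℝ => y * |y| ^ (1/β))
      ((1 + 1/β) * |x| ^ (1/β)) x := by
    intro x
    rcases lt_trichotomy x 0 with hx | hx | hx
    · have key : HasDerivAt (fun y : ℝ => -((-y) ^ ((1:ℝ) + 1/β)))
          ((1 + 1/β) * (-x) ^ (1/β)) x := by
        have h1 : HasDerivAt (fun y : ℝ => (-y) ^ ((1:ℝ) + 1/β))
            ((1 + 1/β) * (-x) ^ ((1:ℝ) + 1/β - 1) * (-1)) x :=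
          (Real.hasDerivAt_rpow_const (Or.inl (by linarith : -x ≠ 0))).comp x (hasDerivAt_neg x)
        have h2 := h1.neg
        have : -((1 + 1/β) * (-x) ^ ((1:ℝ) + 1/β - 1) * (-1)) = (1 + 1/β) * (-x) ^ (1/β) := by
          rw [show (1:ℝ) + 1/β - 1 = 1/β by ring]; ring
        rwa [this] at h2
      have heq : (fun y : ℝ => y * |y| ^ (1/β)) =ᶠ[nhds x]
          (fun y : ℝ => -((-y) ^ ((1:ℝ) + 1/β))) := by
        filter_upwards [Iio_mem_nhds hx] with y hy
        have hy' : (0:ℝ) < -y := by simp at hy; linarith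
        rw [abs_of_neg (by simpa using hy), Real.rpow_add hy', Real.rpow_one]; ring
      have := key.congr_of_eventuallyEq heq
      rwa [abs_of_neg hx]
    · subst hx
      rw [hasDerivAt_iff_tendsto_slope]
      have h0 : ((1:ℝ) + 1/β) * |(0:ℝ)| ^ (1/β) = 0 := by
        rw [abs_zero, Real.zero_rpow (ne_of_gt hδpos), mul_zero]
      rw [h0]
      have hcont : Filter.Tendsto (fun y : ℝ => |y| ^ (1/β)) (nhds 0) (nhds 0) := by
        have hc : ContinuousAt (fun y : ℝ => |y| ^ (1/β)) 0 :=
          ContinuousAt.rpow_const continuous_abs.continuousAt (Or.inr hδpos.le)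
        have h2 := hc.tendsto
        rw [show |(0:ℝ)| ^ (1/β) = 0 by
          rw [abs_zero, Real.zero_rpow (ne_of_gt hδpos)]] at h2
        exact h2
      refine Filter.Tendsto.congr' ?_ (hcont.mono_left nhdsWithin_le_nhds)
      filter_upwards [self_mem_nhdsWithin] with y hy
      have hy0 : y ≠ 0 := hy
      rw [slope_def_field]; simp only [zero_mul, sub_zero]; exact (mul_div_cancel_left₀ _ hy0).symm
    · have key : HasDerivAt (fun y : ℝ => y ^ ((1:ℝ) + 1/β))
          ((1 + 1/β) * x ^ (1/β)) x := by
        have h1 : HasDerivAt (fun y : ℝ => y ^ ((1:ℝ) + 1/β))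
            ((1 + 1/β) * x ^ ((1:ℝ) + 1/β - 1)) x :=
          Real.hasDerivAt_rpow_const (Or.inl hx.ne')
        rwa [show (1:ℝ) + 1/β - 1 = 1/β by ring] at h1
      have heq : (fun y : ℝ => y * |y| ^ (1/β)) =ᶠ[nhds x]
          (fun y : ℝ => y ^ ((1:ℝ) + 1/β)) := by
        filter_upwards [Ioi_mem_nhds hx] with y hy
        have hy' : (0:ℝ) < y := hy
        rw [abs_of_pos hy', Real.rpow_add hy', Real.rpow_one]
      have := key.congr_of_eventuallyEq heq
      rwa [abs_of_pos hx]
  have hFeq : F = fun x : ℝ => x + Tstar * (-x + C * (x * |x| ^ (1/β)) + E x) := by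
    funext x; rw [hF, hw₀]; ring
  have hFd : ∀ x : ℝ, HasDerivAt F
      (1 + Tstar * (-1 + C * ((1 + 1/β) * |x| ^ (1/β)) + deriv E x)) x := by
    intro x
    rw [hFeq]
    exact (hasDerivAt_id x).add
      ((((hasDerivAt_id x).neg.add ((hg x).const_mul C)).add
        (hEdiff x).hasDerivAt).const_mul Tstar)
  have hFdiff : Differentiable ℝ F := fun x => (hFd x).differentiableAt
  have hderiv : ∀ x : ℝ, deriv F x =
      1 + Tstar * (-1 + C * ((1 + 1/β) * |x| ^ (1/β)) + deriv E x) :=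
    fun x => (hFd x).deriv
  have hbound : ∀ x : ℝ, deriv F x ≥ Tstar * ((1 + 1/β) * C - H) * |x| ^ (1/β) := by
    intro x
    rw [hderiv x]
    have hA : (0:ℝ) ≤ |x| ^ (1/β) := Real.rpow_nonneg (abs_nonneg x) _
    have h1 : |deriv E x - deriv E 0| ≤ H * |x| ^ (1/β) := by simpa using hH x 0
    have h2 : deriv E x - deriv E 0 ≥ -(H * |x| ^ (1/β)) := by
      have := abs_le.mp h1; linarith [this.1]
    nlinarith [mul_le_mul_of_nonneg_left h2.le hTpos.le, hTE]
  have hpos : ∀ x : ℝ, x ≠ 0 → 0 < deriv F x := by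
    intro x hx
    have hA : (0:ℝ) < |x| ^ (1/β) :=
      Real.rpow_pos_of_pos (abs_pos.mpr hx) _
    have : 0 < Tstar * ((1 + 1/β) * C - H) * |x| ^ (1/β) := by
      apply mul_pos (mul_pos hTpos (by linarith)) hA
    linarith [hbound x]
  have hmono : StrictMono F := by
    have h1 : StrictMonoOn F (Set.Iic 0) := by
      apply strictMonoOn_of_deriv_pos (convex_Iic 0) hFdiff.continuous.continuousOn
      intro x hx
      rw [interior_Iic] at hx
      exact hpos x (ne_of_lt hx)
    have h2 : StrictMonoOn F (Set.Ici 0) := by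
      apply strictMonoOn_of_deriv_pos (convex_Ici 0) hFdiff.continuous.continuousOn
      intro x hx
      rw [interior_Ici] at hx
      exact hpos x (ne_of_gt hx)
    intro a b hab
    rcases le_total b 0 with hb | hb
    · exact h1 (le_of_lt (lt_of_lt_of_le hab hb)) hb hab
    · rcases le_total 0 a with ha | ha
      · exact h2 ha (le_trans ha hab.le) hab
      · rcases ha.lt_or_eq with ha' | ha'
        · exact lt_of_lt_of_le
            (h1 (Set.mem_Iic.mpr ha) (Set.mem_Iic.mpr le_rfl) ha')
            (h2.monotoneOn (Set.mem_Ici.mpr le_rfl) (Set.mem_Ici.mpr hb) hb)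
        · subst ha'; exact h2 (Set.mem_Ici.mpr le_rfl) (Set.mem_Ici.mpr hb) hab
  have hc : (0:ℝ) < Tstar * ((1 + 1/β) * C - H) := mul_pos hTpos (by linarith)
  have honege : ∀ x : ℝ, (1:ℝ) ≤ |x| → Tstar * ((1 + 1/β) * C - H) ≤ deriv F x := by
    intro x hx
    have h1 : (1:ℝ) ≤ |x| ^ (1/β) := by
      calc (1:ℝ) = 1 ^ (1/β) := (Real.one_rpow _).symm
        _ ≤ |x| ^ (1/β) := Real.rpow_le_rpow zero_le_one hx hδpos.le
    calc Tstar * ((1 + 1/β) * C - H)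
        = Tstar * ((1 + 1/β) * C - H) * 1 := (mul_one _).symm
      _ ≤ Tstar * ((1 + 1/β) * C - H) * |x| ^ (1/β) :=
          mul_le_mul_of_nonneg_left h1 hc.le
      _ ≤ deriv F x := hbound x
  have hgrow := (convex_Ici (1:ℝ)).mul_sub_le_image_sub_of_le_deriv
    hFdiff.continuous.continuousOn hFdiff.differentiableOn
    (C := Tstar * ((1 + 1/β) * C - H))
    (fun x hx => honege x (by rw [interior_Ici] at hx; rw [abs_of_pos (by linarith [Set.mem_Ioi.mp hx])]; exact le_of_lt hx))
  have hgrow' := (convex_Iic (-1:ℝ)).mul_sub_le_image_sub_of_le_deriv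
    hFdiff.continuous.continuousOn hFdiff.differentiableOn
    (C := Tstar * ((1 + 1/β) * C - H))
    (fun x hx => honege x (by rw [interior_Iic] at hx; rw [abs_of_neg (by linarith [Set.mem_Iio.mp hx])]; linarith [Set.mem_Iio.mp hx]))
  have htop : Filter.Tendsto F Filter.atTop Filter.atTop := by
    apply Filter.tendsto_atTop_mono'
      (f₁ := fun y : ℝ => F 1 + Tstar * ((1 + 1/β) * C - H) * (y - 1))
    · filter_upwards [Filter.eventually_ge_atTop (1:ℝ)] with y hy
      have := hgrow 1 (Set.mem_Ici.mpr le_rfl) y (Set.mem_Ici.mpr hy) hy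
      linarith
    · apply Filter.tendsto_atTop_add_const_left
      apply Filter.Tendsto.const_mul_atTop hc
      exact Filter.tendsto_atTop_add_const_right _ (-1) Filter.tendsto_id
  have hbot : Filter.Tendsto F Filter.atBot Filter.atBot := by
    apply Filter.tendsto_atBot_mono'
      (f₁ := fun y : ℝ => F (-1) + Tstar * ((1 + 1/β) * C - H) * (y + 1))
    · filter_upwards [Filter.eventually_le_atBot (-1:ℝ)] with y hy
      have := hgrow' y (Set.mem_Iic.mpr hy) (-1) (Set.mem_Iic.mpr le_rfl) hy
      nlinarith [this]
    · apply Filter.tendsto_atBot_add_const_left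
      apply Filter.Tendsto.const_mul_atBot hc
      exact Filter.tendsto_atBot_add_const_right _ 1 Filter.tendsto_id
  have hsurj : Function.Surjective F :=
    Continuous.surjective hFdiff.continuous htop hbot
  have hF0 : F 0 = ystar := by
    rw [hF 0, hw₀ 0, hy, hT]
    have hne : 1 - deriv E 0 ≠ 0 := ne_of_gt h1E
    field_simp
    simp
  have hsign : ∀ x : ℝ, Real.sign (F x - ystar) = Real.sign x := by
    intro x
    rcases lt_trichotomy x 0 with hx | hx | hx
    · have hlt : F x < ystar := hF0 ▸ hmono hx
      rw [Real.sign_of_neg (by linarith), Real.sign_of_neg hx]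
    · subst hx; rw [hF0, sub_self]
    · have hlt : ystar < F x := hF0 ▸ hmono hx
      rw [Real.sign_of_pos (by linarith), Real.sign_of_pos hx]
  exact ⟨hFdiff, hbound, fun x => mul_nonneg hc.le (Real.rpow_nonneg (abs_nonneg x) _),
    hmono, ⟨hmono.injective, hsurj⟩, hsign⟩
end

section
/- Let β ≥ 1, C > 0, and let E : ℝ → ℝ be continuously differentiable with E'(0) < 1 and [E']_{C^{0,1/β}} < (1 + 1/β)·C. Define w₀(x) = −x + C·x·|x|^{1/β} + E(x) and T₊ := 1/(1 − E'(0)). Then for each t ∈ [0, T₊) the map ηₜ(x) := x + t·w₀(x) is a strictly increasing continuously differentiable bijection of ℝ onto ℝ, and the function w : ℝ × [0, T₊) → ℝ defined by w(ηₜ(x), t) := w₀(x) is continuously differentiable, satisfies Burgers' equation ∂_t w + w ∂_y w = 0 on ℝ × [0, T₊), and satisfies w(·, 0) = w₀. Moreover, w is the unique continuously differentiable solution of Burgers' equation on ℝ × [0, T₊) with initial data w₀. -/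
open Set Real
open Filter Function Topology

/-- `w` is a continuously differentiable solution of Burgers' equation
`∂ₜ w + w ∂_y w = 0` on `ℝ × [0, T)` with initial data `w₀`: `w`, together with
its partial derivatives `wt = ∂ₜ w` and `wy = ∂_y w`, is continuous on
`ℝ × [0, T)`, and the equation holds there. -/
def IsBurgersSolOn (T : ℝ) (w₀ : ℝ → ℝ) (w : ℝ → ℝ → ℝ) : Prop :=
  (∀ y : ℝ, w y 0 = w₀ y) ∧
  ContinuousOn (fun p : ℝ × ℝ => w p.1 p.2) (univ ×ˢ Ico (0:ℝ) T) ∧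
  ∃ wt wy : ℝ → ℝ → ℝ,
    ContinuousOn (fun p : ℝ × ℝ => wt p.1 p.2) (univ ×ˢ Ico (0:ℝ) T) ∧
    ContinuousOn (fun p : ℝ × ℝ => wy p.1 p.2) (univ ×ˢ Ico (0:ℝ) T) ∧
    (∀ (y : ℝ), ∀ t ∈ Ico (0:ℝ) T,
      HasDerivWithinAt (fun s => w y s) (wt y t) (Ico (0:ℝ) T) t) ∧
    (∀ (y : ℝ), ∀ t ∈ Ico (0:ℝ) T, HasDerivAt (fun x => w x t) (wy y t) y) ∧
    (∀ (y : ℝ), ∀ t ∈ Ico (0:ℝ) T, wt y t + w y t * wy y t = 0)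


/-- Mean value theorem, convenient form. -/
lemma mvt_abs {f f' : ℝ → ℝ} (hf : ∀ z, HasDerivAt f (f' z) z) (a b : ℝ) :
    ∃ ξ, |ξ - a| ≤ |b - a| ∧ f b - f a = f' ξ * (b - a) := by
  rcases lt_trichotomy a b with h | h | h
  · obtain ⟨c, hc, hc'⟩ := exists_hasDerivAt_eq_slope f f' h
      (fun z _ => (hf z).continuousAt.continuousWithinAt) (fun z hz => hf z)
    refine ⟨c, ?_, ?_⟩
    · rw [abs_of_pos (sub_pos.2 hc.1), abs_of_pos (sub_pos.2 h)]
      linarith [hc.2]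
    · rw [eq_div_iff (sub_ne_zero.2 h.ne')] at hc'
      linear_combination (-1 : ℝ) * hc'
  · exact ⟨a, by simp [h], by simp [h]⟩
  · obtain ⟨c, hc, hc'⟩ := exists_hasDerivAt_eq_slope f f' h
      (fun z _ => (hf z).continuousAt.continuousWithinAt) (fun z hz => hf z)
    refine ⟨c, ?_, ?_⟩
    · rw [abs_of_neg (by linarith [hc.2] : c - a < 0), abs_of_neg (by linarith : b - a < 0)]
      linarith [hc.1]
    · rw [eq_div_iff (sub_ne_zero.2 h.ne')] at hc'
      linear_combination hc'

theorem burgers_main (w₀ : ℝ → ℝ) (hw : ContDiff ℝ 1 w₀) (A T : ℝ) (hA : 0 < A)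
    (hd : ∀ x, -A ≤ deriv w₀ x) (hT : T = 1 / A) :
    (∀ t ∈ Ico (0:ℝ) T,
      StrictMono (fun x => x + t * w₀ x) ∧
      ContDiff ℝ 1 (fun x => x + t * w₀ x) ∧
      Function.Bijective (fun x => x + t * w₀ x)) ∧
    ∃ w : ℝ → ℝ → ℝ,
      (∀ (x : ℝ), ∀ t ∈ Ico (0:ℝ) T, w (x + t * w₀ x) t = w₀ x) ∧
      IsBurgersSolOn T w₀ w ∧
      (∀ w' : ℝ → ℝ → ℝ, IsBurgersSolOn T w₀ w' →
        ∀ (y : ℝ), ∀ t ∈ Ico (0:ℝ) T, w' y t = w y t) := by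
  have hdiff : Differentiable ℝ w₀ := hw.differentiable one_ne_zero
  have hw' : ∀ x, HasDerivAt w₀ (deriv w₀ x) x := fun x => (hdiff x).hasDerivAt
  have hdc : Continuous (deriv w₀) := hw.continuous_deriv le_rfl
  have hT0 : 0 < T := by rw [hT]; positivity
  have hsA : ∀ {s : ℝ}, 0 ≤ s → s < T → s * A < 1 := by
    intro s h0 h1
    have h2 := mul_lt_mul_of_pos_right (hT ▸ h1) hA
    rwa [one_div, inv_mul_cancel₀ hA.ne'] at h2
  have hden : ∀ {s : ℝ}, 0 ≤ s → s < T → ∀ x, 0 < 1 + s * deriv w₀ x := by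
    intro s h0 h1 x
    have h2 : s * (-A) ≤ s * deriv w₀ x := mul_le_mul_of_nonneg_left (hd x) h0
    have h3 := hsA h0 h1
    nlinarith
  have hηd : ∀ (t x : ℝ), HasDerivAt (fun z => z + t * w₀ z) (1 + t * deriv w₀ x) x :=
    fun t x => (hasDerivAt_id x).add ((hw' x).const_mul t)
  have hmono : ∀ t : ℝ, 0 ≤ t → t < T → StrictMono (fun z => z + t * w₀ z) := by
    intro t h0 h1
    refine strictMono_of_deriv_pos fun x => ?_
    rw [(hηd t x).deriv]
    exact hden h0 h1 x
  have hlow : ∀ s : ℝ, 0 ≤ s → ∀ a b : ℝ, a ≤ b →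
      (1 - s * A) * (b - a) ≤ (b + s * w₀ b) - (a + s * w₀ a) := by
    intro s h0 a b hab
    have hm : Monotone (fun z => z + s * w₀ z - (1 - s * A) * z) := by
      refine monotone_of_deriv_nonneg ?_ ?_
      · exact (differentiable_id.add (hdiff.const_mul s)).sub (differentiable_id.const_mul _)
      · intro z
        have hz : HasDerivAt (fun z => z + s * w₀ z - (1 - s * A) * z)
            (1 + s * deriv w₀ z - (1 - s * A) * 1) z :=
          (hηd s z).sub ((hasDerivAt_id z).const_mul _)
        rw [hz.deriv]
        have h2 : s * (-A) ≤ s * deriv w₀ z := mul_le_mul_of_nonneg_left (hd z) h0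
        nlinarith
    have := hm hab
    simp only at this
    linarith
  have habs : ∀ s : ℝ, 0 ≤ s → ∀ a b : ℝ,
      (1 - s * A) * |b - a| ≤ |(b + s * w₀ b) - (a + s * w₀ a)| := by
    intro s h0 a b
    rcases le_total a b with h | h
    · rw [abs_of_nonneg (sub_nonneg.2 h)]
      exact le_trans (hlow s h0 a b h) (le_abs_self _)
    · rw [abs_sub_comm, abs_sub_comm (b + s * w₀ b)]
      rw [abs_of_nonneg (sub_nonneg.2 h)]
      exact le_trans (hlow s h0 b a h) (le_abs_self _)
  have hsurj : ∀ t : ℝ, 0 ≤ t → t < T → Function.Surjective (fun z => z + t * w₀ z) := by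
    intro t h0 h1
    have hc0 : 0 < 1 - t * A := by have := hsA h0 h1; linarith
    have hcont : Continuous (fun z => z + t * w₀ z) :=
      continuous_id.add (continuous_const.mul hw.continuous)
    refine hcont.surjective ?_ ?_
    · refine tendsto_atTop_mono' _ ?_
        (tendsto_atTop_add_const_left _ ((0:ℝ) + t * w₀ 0) (Tendsto.const_mul_atTop hc0 tendsto_id))
      filter_upwards [eventually_ge_atTop (0:ℝ)] with b hb
      have := hlow t h0 0 b hb
      simp only [id] at *
      linarith
    · refine tendsto_atBot_mono' _ ?_
        (tendsto_atBot_add_const_left _ ((0:ℝ) + t * w₀ 0) (Tendsto.const_mul_atBot hc0 tendsto_id))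
      filter_upwards [eventually_le_atBot (0:ℝ)] with b hb
      have := hlow t h0 b 0 hb
      simp only [id] at *
      linarith
  set X : ℝ → ℝ → ℝ := fun y s => Function.invFun (fun x => x + s * w₀ x) y with hXdef
  have hXeq : ∀ s : ℝ, 0 ≤ s → s < T → ∀ y, X y s + s * w₀ (X y s) = y := by
    intro s h0 h1 y
    exact Function.invFun_eq (hsurj s h0 h1 y)
  have hXx : ∀ t : ℝ, 0 ≤ t → t < T → ∀ x, X (x + t * w₀ x) t = x := by
    intro t h0 h1 x
    refine (hmono t h0 h1).injective ?_
    show X (x + t * w₀ x) t + t * w₀ (X (x + t * w₀ x) t) = x + t * w₀ x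
    exact hXeq t h0 h1 _
  have hXest : ∀ {s : ℝ}, 0 ≤ s → s < T → ∀ a y : ℝ,
      (1 - s * A) * |X y s - a| ≤ |y - (a + s * w₀ a)| := by
    intro s h0 h1 a y
    have h2 := habs s h0 a (X y s)
    rwa [hXeq s h0 h1 y] at h2
  -- joint continuity of X on the strip
  have hXcont : ∀ p : ℝ × ℝ, p ∈ univ ×ˢ Ico (0:ℝ) T →
      ContinuousWithinAt (fun p : ℝ × ℝ => X p.1 p.2) (univ ×ˢ Ico (0:ℝ) T) p := by
    rintro ⟨y, t⟩ hp
    obtain ⟨-, ht0, htT⟩ : (y, t).1 ∈ (univ : Set ℝ) ∧ 0 ≤ t ∧ t < T := ⟨hp.1, hp.2.1, hp.2.2⟩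
    set x := X y t with hx
    have hyx : x + t * w₀ x = y := hXeq t ht0 htT y
    set m : ℝ := (t + T) / 2 with hm
    have htm : t < m := by rw [hm]; linarith
    have hmT : m < T := by rw [hm]; linarith
    have hm0 : 0 ≤ m := by rw [hm]; linarith
    have hc0 : 0 < 1 - m * A := by have := hsA hm0 hmT; linarith
    rw [ContinuousWithinAt, tendsto_iff_dist_tendsto_zero]
    have hev : ∀ᶠ p : ℝ × ℝ in 𝓝[univ ×ˢ Ico (0:ℝ) T] (y, t), p.2 < m := by
      refine eventually_nhdsWithin_of_eventually_nhds ?_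
      exact (isOpen_lt continuous_snd continuous_const).eventually_mem (by simpa using htm)
    have hbnd : ∀ᶠ p : ℝ × ℝ in 𝓝[univ ×ˢ Ico (0:ℝ) T] (y, t),
        dist (X p.1 p.2) x ≤ (1 - m * A)⁻¹ * (|p.1 - y| + |w₀ x| * |p.2 - t|) := by
      filter_upwards [eventually_mem_nhdsWithin, hev] with p hmem hplt
      obtain ⟨-, hp0, hpT⟩ : p.1 ∈ (univ : Set ℝ) ∧ 0 ≤ p.2 ∧ p.2 < T :=
        ⟨hmem.1, hmem.2.1, hmem.2.2⟩
      have key := hXest hp0 hpT x p.1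
      have h3 : 1 - m * A ≤ 1 - p.2 * A := by nlinarith [hplt.le]
      have h4 : (1 - m * A) * |X p.1 p.2 - x| ≤ |p.1 - (x + p.2 * w₀ x)| := by
        calc (1 - m * A) * |X p.1 p.2 - x| ≤ (1 - p.2 * A) * |X p.1 p.2 - x| :=
              mul_le_mul_of_nonneg_right h3 (abs_nonneg _)
          _ ≤ _ := key
      have h5 : |p.1 - (x + p.2 * w₀ x)| ≤ |p.1 - y| + |w₀ x| * |p.2 - t| := by
        have : p.1 - (x + p.2 * w₀ x) = (p.1 - y) - ((p.2 - t) * w₀ x) := by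
          rw [← hyx]; ring
        rw [this]
        calc |(p.1 - y) - ((p.2 - t) * w₀ x)| ≤ |p.1 - y| + |(p.2 - t) * w₀ x| :=
              abs_sub _ _
          _ = |p.1 - y| + |w₀ x| * |p.2 - t| := by rw [abs_mul]; ring
      rw [Real.dist_eq]
      rw [← le_div_iff₀' hc0] at h4
      calc |X p.1 p.2 - x| ≤ |p.1 - (x + p.2 * w₀ x)| / (1 - m * A) := h4
        _ ≤ (|p.1 - y| + |w₀ x| * |p.2 - t|) / (1 - m * A) := by gcongr
        _ = (1 - m * A)⁻¹ * (|p.1 - y| + |w₀ x| * |p.2 - t|) := by rw [div_eq_inv_mul]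
    refine squeeze_zero' (Eventually.of_forall fun p => dist_nonneg) hbnd ?_
    have hcont2 : Tendsto (fun p : ℝ × ℝ => (1 - m * A)⁻¹ * (|p.1 - y| + |w₀ x| * |p.2 - t|))
        (𝓝 (y, t)) (𝓝 ((1 - m * A)⁻¹ * (|y - y| + |w₀ x| * |t - t|))) := by
      apply Continuous.tendsto
      fun_prop
    simp only [sub_self, abs_zero, mul_zero, add_zero, zero_add] at hcont2
    simpa using hcont2.mono_left nhdsWithin_le_nhds
  -- derivative of X in y
  have hXyD : ∀ y t : ℝ, 0 ≤ t → t < T →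
      HasDerivAt (fun z => X z t) (1 + t * deriv w₀ (X y t))⁻¹ y := by
    intro y t ht0 htT
    have hc0 : 0 < 1 - t * A := by have := hsA ht0 htT; linarith
    set x := X y t with hx
    have hyx : x + t * w₀ x = y := hXeq t ht0 htT y
    set ξ : ℝ → ℝ := fun z => Classical.choose (mvt_abs hw' x (X z t)) with hξdef
    have hξ : ∀ z, |ξ z - x| ≤ |X z t - x| ∧
        w₀ (X z t) - w₀ x = deriv w₀ (ξ z) * (X z t - x) :=
      fun z => Classical.choose_spec (mvt_abs hw' x (X z t))
    have hdist0 : Tendsto (fun z => dist (X z t) x) (𝓝[≠] y) (𝓝 0) := by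
      have hb : ∀ z : ℝ, dist (X z t) x ≤ (1 - t * A)⁻¹ * |z - y| := by
        intro z
        have key := hXest ht0 htT x z
        rw [hyx] at key
        have h2 := (le_div_iff₀' hc0).2 key
        rw [div_eq_inv_mul] at h2
        simpa [Real.dist_eq] using h2
      refine squeeze_zero' (Eventually.of_forall fun z => dist_nonneg)
        (Eventually.of_forall hb) ?_
      have : Tendsto (fun z : ℝ => (1 - t * A)⁻¹ * |z - y|) (𝓝 y)
          (𝓝 ((1 - t * A)⁻¹ * |y - y|)) := Continuous.tendsto (by fun_prop) y
      simpa using this.mono_left nhdsWithin_le_nhds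
    have hXz : Tendsto (fun z => X z t) (𝓝[≠] y) (𝓝 x) :=
      tendsto_iff_dist_tendsto_zero.mpr hdist0
    have hξz : Tendsto ξ (𝓝[≠] y) (𝓝 x) := by
      rw [tendsto_iff_dist_tendsto_zero]
      apply squeeze_zero' (Eventually.of_forall fun z => dist_nonneg)
        (Eventually.of_forall fun z => ?_) hdist0
      rw [Real.dist_eq, Real.dist_eq]
      exact (hξ z).1
    rw [hasDerivAt_iff_tendsto_slope]
    have hmain : Tendsto (fun z => (1 + t * deriv w₀ (ξ z))⁻¹) (𝓝[≠] y)
        (𝓝 (1 + t * deriv w₀ x)⁻¹) := by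
      refine Tendsto.inv₀ ?_ (hden ht0 htT x).ne'
      exact tendsto_const_nhds.add (tendsto_const_nhds.mul ((hdc.tendsto x).comp hξz))
    refine hmain.congr' ?_
    filter_upwards [eventually_mem_nhdsWithin] with z hz
    have hzy : z - y ≠ 0 := sub_ne_zero.2 hz
    have hiden : (1 + t * deriv w₀ (ξ z)) ≠ 0 := (hden ht0 htT (ξ z)).ne'
    have hkey : (X z t - x) * (1 + t * deriv w₀ (ξ z)) = z - y := by
      have h1 := hXeq t ht0 htT z
      have h2 := (hξ z).2
      linear_combination h1 - hyx - t * h2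
    rw [slope_def_field, ← hx]
    rw [eq_div_iff hzy, ← hkey, mul_comm, mul_assoc, mul_inv_cancel₀ hiden, mul_one]
  -- derivative of X in t
  have hXtD : ∀ y t : ℝ, 0 ≤ t → t < T →
      HasDerivWithinAt (fun s => X y s) (-(w₀ (X y t)) / (1 + t * deriv w₀ (X y t)))
        (Ico (0:ℝ) T) t := by
    intro y t ht0 htT
    set x := X y t with hx
    have hyx : x + t * w₀ x = y := hXeq t ht0 htT y
    set m : ℝ := (t + T) / 2 with hm
    have htm : t < m := by rw [hm]; linarith
    have hmT : m < T := by rw [hm]; linarith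
    have hm0 : 0 ≤ m := by rw [hm]; linarith
    have hc0 : 0 < 1 - m * A := by have := hsA hm0 hmT; linarith
    set ξ : ℝ → ℝ := fun s => Classical.choose (mvt_abs hw' x (X y s)) with hξdef
    have hξ : ∀ s, |ξ s - x| ≤ |X y s - x| ∧
        w₀ (X y s) - w₀ x = deriv w₀ (ξ s) * (X y s - x) :=
      fun s => Classical.choose_spec (mvt_abs hw' x (X y s))
    have hevm : ∀ᶠ s : ℝ in 𝓝[Ico (0:ℝ) T \ {t}] t, s < m :=
      eventually_nhdsWithin_of_eventually_nhds
        ((isOpen_lt continuous_id continuous_const).eventually_mem (by simpa using htm))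
    have hdist0 : Tendsto (fun s => dist (X y s) x) (𝓝[Ico (0:ℝ) T \ {t}] t) (𝓝 0) := by
      have hb : ∀ᶠ s : ℝ in 𝓝[Ico (0:ℝ) T \ {t}] t,
          dist (X y s) x ≤ (1 - m * A)⁻¹ * (|s - t| * |w₀ x|) := by
        filter_upwards [eventually_mem_nhdsWithin, hevm] with s hs hsm
        have hs0 : 0 ≤ s := hs.1.1
        have hsT : s < T := hs.1.2
        have key := hXest hs0 hsT x y
        have h5 : y - (x + s * w₀ x) = -((s - t) * w₀ x) := by rw [← hyx]; ring
        rw [h5, abs_neg, abs_mul] at key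
        have h3 : (1 - m * A) * |X y s - x| ≤ (1 - s * A) * |X y s - x| := by
          have : 1 - m * A ≤ 1 - s * A := by nlinarith [hsm.le]
          exact mul_le_mul_of_nonneg_right this (abs_nonneg _)
        have h2 := (le_div_iff₀' hc0).2 (le_trans h3 key)
        rw [div_eq_inv_mul] at h2
        simpa [Real.dist_eq] using h2
      refine squeeze_zero' (Eventually.of_forall fun s => dist_nonneg) hb ?_
      have : Tendsto (fun s : ℝ => (1 - m * A)⁻¹ * (|s - t| * |w₀ x|)) (𝓝 t)
          (𝓝 ((1 - m * A)⁻¹ * (|t - t| * |w₀ x|))) := Continuous.tendsto (by fun_prop) t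
      simpa using this.mono_left nhdsWithin_le_nhds
    have hXs : Tendsto (fun s => X y s) (𝓝[Ico (0:ℝ) T \ {t}] t) (𝓝 x) :=
      tendsto_iff_dist_tendsto_zero.mpr hdist0
    have hξs : Tendsto ξ (𝓝[Ico (0:ℝ) T \ {t}] t) (𝓝 x) := by
      rw [tendsto_iff_dist_tendsto_zero]
      apply squeeze_zero' (Eventually.of_forall fun s => dist_nonneg)
        (Eventually.of_forall fun s => ?_) hdist0
      rw [Real.dist_eq, Real.dist_eq]
      exact (hξ s).1
    rw [hasDerivWithinAt_iff_tendsto_slope]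
    have hmain : Tendsto (fun s => -(w₀ (X y s)) / (1 + t * deriv w₀ (ξ s)))
        (𝓝[Ico (0:ℝ) T \ {t}] t) (𝓝 (-(w₀ x) / (1 + t * deriv w₀ x))) := by
      refine Tendsto.div ?_ ?_ (hden ht0 htT x).ne'
      · exact (((hw.continuous.tendsto x).comp hXs)).neg
      · exact tendsto_const_nhds.add (tendsto_const_nhds.mul ((hdc.tendsto x).comp hξs))
    refine hmain.congr' ?_
    filter_upwards [eventually_mem_nhdsWithin] with s hs
    have hst : s - t ≠ 0 := sub_ne_zero.2 hs.2
    have hiden : (1 + t * deriv w₀ (ξ s)) ≠ 0 := (hden ht0 htT (ξ s)).ne'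
    have hkey : (X y s - x) * (1 + t * deriv w₀ (ξ s)) = -((s - t) * w₀ (X y s)) := by
      have h1 := hXeq s hs.1.1 hs.1.2 y
      have h2 := (hξ s).2
      linear_combination h1 - hyx - t * h2
    rw [slope_def_field, ← hx, div_eq_div_iff hiden hst]
    linear_combination -hkey
  -- assemble
  refine ⟨fun t ht => ⟨hmono t ht.1 ht.2,
      contDiff_id.add (contDiff_const.mul hw), (hmono t ht.1 ht.2).injective, hsurj t ht.1 ht.2⟩,
    fun y s => w₀ (X y s),
    fun x t ht => by show w₀ (X (x + t * w₀ x) t) = w₀ x; rw [hXx t ht.1 ht.2 x],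
    ⟨?init, ?contw, fun y s => -(w₀ (X y s) * (deriv w₀ (X y s) / (1 + s * deriv w₀ (X y s)))),
      fun y s => deriv w₀ (X y s) / (1 + s * deriv w₀ (X y s)), ?contwt, ?contwy, ?dt, ?dy, ?eq⟩,
    ?uniq⟩
  case init =>
    intro y
    have h1 := hXeq 0 le_rfl hT0 y
    have h2 : X y 0 = y := by linarith [h1]
    show w₀ (X y 0) = w₀ y
    rw [h2]
  case contw =>
    intro p hp
    exact hw.continuous.continuousAt.comp_continuousWithinAt (hXcont p hp)
  case contwy =>
    intro p hp
    have hX := hXcont p hp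
    have hnum : ContinuousWithinAt (fun p : ℝ × ℝ => deriv w₀ (X p.1 p.2))
        (univ ×ˢ Ico (0:ℝ) T) p := hdc.continuousAt.comp_continuousWithinAt hX
    have hden2 : ContinuousWithinAt (fun p : ℝ × ℝ => 1 + p.2 * deriv w₀ (X p.1 p.2))
        (univ ×ˢ Ico (0:ℝ) T) p :=
      continuousWithinAt_const.add (continuous_snd.continuousWithinAt.mul hnum)
    exact hnum.div hden2 (hden hp.2.1 hp.2.2 _).ne'
  case contwt =>
    intro p hp
    have hX := hXcont p hp
    have hnum : ContinuousWithinAt (fun p : ℝ × ℝ => deriv w₀ (X p.1 p.2))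
        (univ ×ˢ Ico (0:ℝ) T) p := hdc.continuousAt.comp_continuousWithinAt hX
    have hden2 : ContinuousWithinAt (fun p : ℝ × ℝ => 1 + p.2 * deriv w₀ (X p.1 p.2))
        (univ ×ˢ Ico (0:ℝ) T) p :=
      continuousWithinAt_const.add (continuous_snd.continuousWithinAt.mul hnum)
    exact (((hw.continuous.continuousAt.comp_continuousWithinAt hX).mul
      (hnum.div hden2 (hden hp.2.1 hp.2.2 _).ne')).neg)
  case dt =>
    intro y t ht
    have h1 := (hw' (X y t)).comp_hasDerivWithinAt t (hXtD y t ht.1 ht.2)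
    have h2 : deriv w₀ (X y t) * (-(w₀ (X y t)) / (1 + t * deriv w₀ (X y t))) =
        -(w₀ (X y t) * (deriv w₀ (X y t) / (1 + t * deriv w₀ (X y t)))) := by ring
    rw [h2] at h1
    exact h1
  case dy =>
    intro y t ht
    have h1 := (hw' (X y t)).comp y (hXyD y t ht.1 ht.2)
    have h2 : deriv w₀ (X y t) * (1 + t * deriv w₀ (X y t))⁻¹ =
        deriv w₀ (X y t) / (1 + t * deriv w₀ (X y t)) := by ring
    rw [h2] at h1
    exact h1
  case eq =>
    intro y t ht
    ring
  case uniq =>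
    rintro w' ⟨h0, hc, wt', wy', hct, hcy, hdt, hdy, heq⟩ y t ht
    show w' y t = w₀ (X y t)
    set x := X y t with hx
    set k := w₀ x with hk
    have hηx : x + t * k = y := hXeq t ht.1 ht.2 y
    set γ : ℝ → ℝ := fun s => x + s * k with hγ
    have hγmem : ∀ s ∈ Icc (0:ℝ) t, s ∈ Ico (0:ℝ) T :=
      fun s hs => ⟨hs.1, lt_of_le_of_lt hs.2 ht.2⟩
    have hγc : Continuous γ := by fun_prop
    set g : ℝ → ℝ := fun s => w' (γ s) s - k with hg
    have hγ0 : γ 0 = x := by simp [hγ]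
    have hg0 : g 0 = 0 := by
      show w' (γ 0) 0 - k = 0
      rw [hγ0, h0 x, hk]
      ring
    have hgc : ContinuousOn g (Icc (0:ℝ) t) := by
      have : ContinuousOn (fun s => w' (γ s) s) (Icc (0:ℝ) t) := by
        have := hc.comp ((hγc.prodMk continuous_id).continuousOn
          (s := Icc (0:ℝ) t)) (fun s hs => ⟨mem_univ _, hγmem s hs⟩)
        exact this
      exact this.sub continuousOn_const
    -- bound for wy' on the characteristic
    obtain ⟨K, hK⟩ : ∃ K, ∀ s ∈ Icc (0:ℝ) t, |wy' (γ s) s| ≤ K := by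
      have hcomp : IsCompact ((fun s => (γ s, s)) '' Icc (0:ℝ) t) :=
        isCompact_Icc.image (hγc.prodMk continuous_id)
      obtain ⟨K, hK⟩ := hcomp.exists_bound_of_continuousOn
        (hcy.mono (by rintro p ⟨s, hs, rfl⟩; exact ⟨mem_univ _, hγmem s hs⟩))
      exact ⟨K, fun s hs => by simpa [Real.norm_eq_abs] using hK _ (mem_image_of_mem _ hs)⟩
    -- derivative of g
    have hgd : ∀ s ∈ Ico (0:ℝ) t, HasDerivWithinAt g (-(wy' (γ s) s) * g s) (Ici s) s := by
      intro s hs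
      have hsT : s ∈ Ico (0:ℝ) T := ⟨hs.1, hs.2.trans ht.2⟩
      have hIci : Ico (0:ℝ) T ∈ 𝓝[Ici s] s :=
        mem_nhdsWithin.mpr ⟨Iio T, isOpen_Iio, hsT.2,
          fun u hu => ⟨le_trans hsT.1 hu.2, hu.1⟩⟩
      have hg2 : HasDerivWithinAt (fun u => w' (γ s) u) (wt' (γ s) s) (Ici s) s :=
        (hdt (γ s) s hsT).mono_of_mem_nhdsWithin hIci
      set S : Set ℝ := Ici s ∩ Iio T with hS
      have hSmem : S ∈ 𝓝[Ici s] s :=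
        mem_nhdsWithin.mpr ⟨Iio T, isOpen_Iio, hsT.2, fun u hu => ⟨hu.2, hu.1⟩⟩
      have hSsub : ∀ u ∈ S, u ∈ Ico (0:ℝ) T := fun u hu => ⟨hsT.1.trans hu.1, hu.2⟩
      -- MVT choice function
      set ξ : ℝ → ℝ := fun u => if h : u ∈ Ico (0:ℝ) T then
          Classical.choose (mvt_abs (fun z => hdy z u h) (γ s) (γ u)) else γ s with hξdef
      have hξ : ∀ u (h : u ∈ Ico (0:ℝ) T), |ξ u - γ s| ≤ |γ u - γ s| ∧
          w' (γ u) u - w' (γ s) u = wy' (ξ u) u * (γ u - γ s) := by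
        intro u h
        have : ξ u = Classical.choose (mvt_abs (fun z => hdy z u h) (γ s) (γ u)) := by
          rw [hξdef]; simp [h]
        rw [this]
        exact Classical.choose_spec (mvt_abs (fun z => hdy z u h) (γ s) (γ u))
      have hg1 : HasDerivWithinAt (fun u => w' (γ u) u - w' (γ s) u)
          (k * wy' (γ s) s) S s := by
        rw [hasDerivWithinAt_iff_tendsto_slope]
        have hξt : Tendsto ξ (𝓝[S \ {s}] s) (𝓝 (γ s)) := by
          rw [tendsto_iff_dist_tendsto_zero]
          have hb : ∀ᶠ u : ℝ in 𝓝[S \ {s}] s, dist (ξ u) (γ s) ≤ |k| * |u - s| := by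
            filter_upwards [eventually_mem_nhdsWithin] with u hu
            have h1 := (hξ u (hSsub u hu.1)).1
            have h2 : γ u - γ s = (u - s) * k := by rw [hγ]; ring
            rw [Real.dist_eq]
            calc |ξ u - γ s| ≤ |γ u - γ s| := h1
              _ = |k| * |u - s| := by rw [h2, abs_mul]; ring
          refine squeeze_zero' (Eventually.of_forall fun u => dist_nonneg) hb ?_
          have : Tendsto (fun u : ℝ => |k| * |u - s|) (𝓝 s)
              (𝓝 (|k| * |s - s|)) := Continuous.tendsto (by fun_prop) s
          simpa using this.mono_left nhdsWithin_le_nhds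
        have hpair : Tendsto (fun u => ((ξ u, u) : ℝ × ℝ)) (𝓝[S \ {s}] s)
            (𝓝[univ ×ˢ Ico (0:ℝ) T] (γ s, s)) := by
          rw [tendsto_nhdsWithin_iff]
          constructor
          · exact (hξt.prodMk (tendsto_id.mono_left nhdsWithin_le_nhds)).mono_right
              (by rw [nhds_prod_eq])
          · filter_upwards [eventually_mem_nhdsWithin] with u hu
            exact ⟨mem_univ _, hSsub u hu.1⟩
        have hwy := ((hcy (γ s, s) ⟨mem_univ _, hsT⟩).tendsto).comp hpair
        have hmul : Tendsto (fun u => wy' (ξ u) u * k) (𝓝[S \ {s}] s)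
            (𝓝 (wy' (γ s) s * k)) := hwy.mul_const k
        rw [show k * wy' (γ s) s = wy' (γ s) s * k from mul_comm _ _]
        refine hmul.congr' ?_
        filter_upwards [eventually_mem_nhdsWithin] with u hu
        have hus : u - s ≠ 0 := sub_ne_zero.2 hu.2
        have h2 := (hξ u (hSsub u hu.1)).2
        have h3 : γ u - γ s = (u - s) * k := by rw [hγ]; ring
        rw [slope_def_field, eq_div_iff hus]
        linear_combination -h2 - wy' (ξ u) u * h3
      have hsum := (hg1.mono_of_mem_nhdsWithin hSmem).add hg2
      have hfun : (fun u => (w' (γ u) u - w' (γ s) u) + w' (γ s) u) = fun u => w' (γ u) u := by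
        funext u; ring
      rw [show ((fun u => w' (γ u) u - w' (γ s) u) + fun u => w' (γ s) u) = fun u => w' (γ u) u from hfun] at hsum
      have hgd' := hsum.sub_const k
      have hval : k * wy' (γ s) s + wt' (γ s) s = -(wy' (γ s) s) * g s := by
        have h1 := heq (γ s) s hsT
        show k * wy' (γ s) s + wt' (γ s) s = -(wy' (γ s) s) * (w' (γ s) s - k)
        linear_combination h1
      rw [show (-(wy' (γ s) s) * g s) = (k * wy' (γ s) s + wt' (γ s) s) from hval.symm]
      exact hgd'
    have hfinal := norm_le_gronwallBound_of_norm_deriv_right_le (δ := 0) (K := K) (ε := 0)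
      hgc hgd (by simp [hg0]) (fun s hs => by
        have h1 : ‖-wy' (γ s) s * g s‖ = |wy' (γ s) s| * ‖g s‖ := by
          rw [Real.norm_eq_abs, Real.norm_eq_abs, abs_mul, abs_neg]
        rw [h1]
        have h2 := mul_le_mul_of_nonneg_right (hK s ⟨hs.1, hs.2.le⟩) (norm_nonneg (g s))
        linarith) t (right_mem_Icc.2 ht.1)
    rw [gronwallBound_ε0_δ0] at hfinal
    have hgt : g t = 0 := norm_le_zero_iff.mp hfinal
    have hγt : γ t = y := by rw [hγ]; exact hηx
    have : w' y t - k = 0 := by rw [← hγt]; exact hgt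
    linarith

lemma cusp_hasDerivAt (α : ℝ) (hα0 : 0 < α) :
    ∀ x : ℝ, HasDerivAt (fun z : ℝ => z * |z| ^ α) ((1 + α) * |x| ^ α) x := by
  intro x
  rcases lt_trichotomy x 0 with hx | hx | hx
  · have hnx : (0:ℝ) < -x := by linarith
    have hr : HasDerivAt (fun z : ℝ => (-z) ^ α) (α * (-x) ^ (α - 1) * (-1)) x :=
      (Real.hasDerivAt_rpow_const (p := α) (Or.inl hnx.ne')).comp x (hasDerivAt_neg x)
    have h1 : HasDerivAt (fun z : ℝ => z * (-z) ^ α)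
        (1 * (-x) ^ α + x * (α * (-x) ^ (α - 1) * (-1))) x := (hasDerivAt_id x).mul hr
    have heq : (fun z : ℝ => z * |z| ^ α) =ᶠ[nhds x] fun z => z * (-z) ^ α := by
      filter_upwards [eventually_lt_nhds hx] with z hz
      rw [abs_of_neg hz]
    have h2 := h1.congr_of_eventuallyEq heq
    have hxx : (-x) * (-x) ^ (α - 1) = (-x) ^ α := by
      rw [mul_comm, ← Real.rpow_add_one hnx.ne']
      norm_num
    have : 1 * (-x) ^ α + x * (α * (-x) ^ (α - 1) * (-1)) = (1 + α) * |x| ^ α := by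
      rw [abs_of_neg hx]
      linear_combination α * hxx
    rwa [this] at h2
  · subst hx
    have hsl : Tendsto (fun z : ℝ => |z| ^ α) (nhdsWithin 0 {(0:ℝ)}ᶜ) (nhds ((1 + α) * |(0:ℝ)| ^ α)) := by
      have hco : ContinuousAt (fun z : ℝ => |z| ^ α) 0 :=
        (Real.continuousAt_rpow_const _ _ (Or.inr hα0.le)).comp continuous_abs.continuousAt
      have h := hco.tendsto.mono_left (nhdsWithin_le_nhds (s := {(0:ℝ)}ᶜ))
      simpa [Real.zero_rpow hα0.ne'] using h
    rw [hasDerivAt_iff_tendsto_slope]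
    refine hsl.congr' ?_
    filter_upwards [eventually_mem_nhdsWithin] with z hz
    have hz0 : z ≠ 0 := hz
    rw [slope_def_field]
    rw [abs_zero, Real.zero_rpow hα0.ne']
    field_simp
    ring
  · have hr : HasDerivAt (fun z : ℝ => z ^ α) (α * x ^ (α - 1)) x :=
      Real.hasDerivAt_rpow_const (p := α) (Or.inl hx.ne')
    have h1 : HasDerivAt (fun z : ℝ => z * z ^ α)
        (1 * x ^ α + x * (α * x ^ (α - 1))) x := (hasDerivAt_id x).mul hr
    have heq : (fun z : ℝ => z * |z| ^ α) =ᶠ[nhds x] fun z => z * z ^ α := by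
      filter_upwards [eventually_gt_nhds hx] with z hz
      rw [abs_of_pos hz]
    have h2 := h1.congr_of_eventuallyEq heq
    have hxx : x * x ^ (α - 1) = x ^ α := by
      rw [mul_comm, ← Real.rpow_add_one hx.ne']
      norm_num
    have : 1 * x ^ α + x * (α * x ^ (α - 1)) = (1 + α) * |x| ^ α := by
      rw [abs_of_pos hx]
      linear_combination α * hxx
    rwa [this] at h2

/-- For `β ≥ 1`, `C > 0`, a `C¹` perturbation `E` with
`E' 0 < 1` and Hölder-`1/β` constant `H < (1+1/β)·C` for `E'`, and data
`w₀ x = -x + C·x·|x|^(1/β) + E x`, for each `t ∈ [0, Tstar)` (where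
`Tstar = 1/(1 - E' 0)`) the flow map `x ↦ x + t·w₀ x` is a strictly increasing
`C¹` bijection of `ℝ`, and the function `w` determined by
`w (x + t·w₀ x) t = w₀ x` is the unique continuously differentiable solution
of Burgers' equation on `ℝ × [0, Tstar)` with initial data `w₀`. -/
theorem burgers_solution_by_characteristics (β C : ℝ) (hβ : 1 ≤ β) (hC : 0 < C)
    (E : ℝ → ℝ) (hE : ContDiff ℝ 1 E) (hE0 : deriv E 0 < 1)
    (H : ℝ) (hH : ∀ x y : ℝ, |deriv E x - deriv E y| ≤ H * |x - y| ^ (1/β))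
    (hHC : H < (1 + 1/β) * C)
    (w₀ : ℝ → ℝ) (hw₀ : ∀ x : ℝ, w₀ x = -x + C * x * |x| ^ (1/β) + E x)
    (Tstar : ℝ) (hT : Tstar = 1 / (1 - deriv E 0)) :
    (∀ t ∈ Ico (0:ℝ) Tstar,
      StrictMono (fun x => x + t * w₀ x) ∧
      ContDiff ℝ 1 (fun x => x + t * w₀ x) ∧
      Function.Bijective (fun x => x + t * w₀ x)) ∧
    ∃ w : ℝ → ℝ → ℝ,
      (∀ (x : ℝ), ∀ t ∈ Ico (0:ℝ) Tstar, w (x + t * w₀ x) t = w₀ x) ∧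
      IsBurgersSolOn Tstar w₀ w ∧
      (∀ w' : ℝ → ℝ → ℝ, IsBurgersSolOn Tstar w₀ w' →
        ∀ (y : ℝ), ∀ t ∈ Ico (0:ℝ) Tstar, w' y t = w y t) := by
  set α : ℝ := 1/β with hα
  have hβ0 : 0 < β := lt_of_lt_of_le one_pos hβ
  have hα0 : 0 < α := by rw [hα]; positivity
  have hEd : Differentiable ℝ E := hE.differentiable one_ne_zero
  have hfun : w₀ = fun z => -z + C * (z * |z| ^ α) + E z := by
    funext z
    rw [hw₀ z]
    ring
  have hD : ∀ x, HasDerivAt w₀ (-1 + C * ((1 + α) * |x| ^ α) + deriv E x) x := by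
    intro x
    have h1 : HasDerivAt (fun z => -z + C * (z * |z| ^ α) + E z)
        (-1 + C * ((1 + α) * |x| ^ α) + deriv E x) x :=
      (((hasDerivAt_id x).neg).add ((cusp_hasDerivAt α hα0 x).const_mul C)).add
        (hEd x).hasDerivAt
    rw [hfun]
    exact h1
  have hderiv : ∀ x, deriv w₀ x = -1 + C * ((1 + α) * |x| ^ α) + deriv E x :=
    fun x => (hD x).deriv
  have hrpow : Continuous fun x : ℝ => |x| ^ α := by
    rw [continuous_iff_continuousAt]
    intro x
    exact (Real.continuousAt_rpow_const _ _ (Or.inr hα0.le)).comp continuous_abs.continuousAt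
  have hw₀C1 : ContDiff ℝ 1 w₀ := by
    rw [contDiff_one_iff_deriv]
    refine ⟨fun x => (hD x).differentiableAt, ?_⟩
    have : deriv w₀ = fun x => -1 + C * ((1 + α) * |x| ^ α) + deriv E x := funext hderiv
    rw [this]
    exact (continuous_const.add (continuous_const.mul (continuous_const.mul hrpow))).add
      (hE.continuous_deriv le_rfl)
  have hd : ∀ x, -(1 - deriv E 0) ≤ deriv w₀ x := by
    intro x
    rw [hderiv x]
    have h1 : |deriv E x - deriv E 0| ≤ H * |x| ^ α := by simpa using hH x 0
    have h2 : H * |x| ^ α ≤ ((1 + α) * C) * |x| ^ α := by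
      have hHle : H ≤ (1 + α) * C := by rw [hα]; linarith
      exact mul_le_mul_of_nonneg_right hHle (Real.rpow_nonneg (abs_nonneg x) α)
    have h3 := (abs_le.1 h1).1
    nlinarith [Real.rpow_nonneg (abs_nonneg x) α]
  exact burgers_main w₀ hw₀C1 (1 - deriv E 0) Tstar (by linarith) hd hT
end

section
/- (Stable shock profile for Burgers, β ≥ 1.) Let β ≥ 1, C > 0, and let E : ℝ → ℝ be continuously differentiable with E'(0) < 1 and [E']_{C^{0,1/β}} < (1 + 1/β)·C. Define w₀(x) = −x + C·x·|x|^{1/β} + E(x), T₊ := 1/(1 − E'(0)), and y₊ := E(0)/(1 − E'(0)). Then there exists a function b : ℝ → ℝ such that: (i) for every x ∈ ℝ, setting y := x + T₊·w₀(x), one has w₀(x) = E(0) − sgn(y − y₊)·b(y)·|y − y₊|^{β/(β+1)} + (1 − E'(0))·(y − y₊); and (ii) for all y ∈ ℝ, (1 − E'(0))^{(2β+1)/(β+1)} / (C + (β/(β+1))·[E']_{C^{0,1/β}})^{β/(β+1)} ≤ b(y) ≤ (1 − E'(0))^{(2β+1)/(β+1)} / (C − (β/(β+1))·[E']_{C^{0,1/β}})^{β/(β+1)}.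 (Thus the Burgers solution with data w₀ at its blowup time T₊ equals w(y, T₊) = E(0) − sgn(y − y₊)·b(y)·|y − y₊|^{β/(β+1)} + (1 − E'(0))·(y − y₊), a C^{β/(β+1)} cusp profile.) -/
open Real


noncomputable def sfun (β : ℝ) (x : ℝ) : ℝ := x * |x| ^ (1/β)

lemma sfun_of_nonneg {β x : ℝ} (hβ : 0 < β) (hx : 0 ≤ x) :
    sfun β x = x ^ (1 + 1/β) := by
  rcases eq_or_lt_of_le hx with h | h
  · rw [← h, Real.zero_rpow (by positivity : (1:ℝ) + 1/β ≠ 0)]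
    simp [sfun]
  · rw [sfun, abs_of_pos h, Real.rpow_add h, Real.rpow_one]

lemma sfun_neg (β x : ℝ) : sfun β (-x) = - sfun β x := by
  simp [sfun, abs_neg]

lemma sfun_strictMono {β : ℝ} (hβ : 0 < β) : StrictMono (sfun β) := by
  have hp : (0:ℝ) < 1 + 1/β := by positivity
  intro a b hab
  rcases le_or_gt 0 a with ha | ha
  · rw [sfun_of_nonneg hβ ha, sfun_of_nonneg hβ (ha.trans hab.le)]
    exact Real.rpow_lt_rpow ha hab hp
  · rcases le_or_gt 0 b with hb | hb
    · have h1 : sfun β a < 0 := by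
        have : (0:ℝ) < |a| ^ (1/β) := Real.rpow_pos_of_pos (abs_pos.mpr ha.ne) _
        exact mul_neg_of_neg_of_pos ha this
      have h2 : 0 ≤ sfun β b := by
        rw [sfun_of_nonneg hβ hb]; positivity
      linarith
    · have := Real.rpow_lt_rpow (le_of_lt (neg_pos.mpr hb)) (by linarith : -b < -a) hp
      rw [← sfun_of_nonneg hβ (by linarith), ← sfun_of_nonneg hβ (by linarith)] at this
      rw [sfun_neg, sfun_neg] at this
      linarith

lemma hasDerivAt_sfun {β : ℝ} (hβ : 0 < β) (x : ℝ) :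
    HasDerivAt (sfun β) ((1 + 1/β) * |x| ^ (1/β)) x := by
  have hp : (0:ℝ) < 1 + 1/β := by positivity
  rcases lt_trichotomy x 0 with hx | hx | hx
  · have h : HasDerivAt (fun t : ℝ => -((-t) ^ (1 + 1/β)))
        ((1 + 1/β) * (-x) ^ (1/β)) x := by
      have h1 : HasDerivAt (fun t : ℝ => (-t : ℝ)) (-1) x := (hasDerivAt_id x).neg
      have h2 := (Real.hasDerivAt_rpow_const (p := 1 + 1/β) (Or.inl (by linarith : -x ≠ 0))).comp x h1
      have h3 := h2.neg
      have h4 : HasDerivAt (fun t : ℝ => -((-t) ^ (1 + 1/β)))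
          (-((1 + 1/β) * (-x) ^ (1 + 1/β - 1) * -1)) x := h3
      convert h4 using 1
      have : (-x) ^ (1 + 1/β - 1) = (-x) ^ (1/β) := by ring_nf
      rw [this]; ring
    have heq : sfun β =ᶠ[nhds x] (fun t : ℝ => -((-t) ^ (1 + 1/β))) := by
      filter_upwards [eventually_lt_nhds hx] with t ht
      rw [← sfun_of_nonneg hβ (by linarith : (0:ℝ) ≤ -t), sfun_neg]; ring
    rw [abs_of_neg hx]
    exact h.congr_of_eventuallyEq heq
  · subst hx
    have habs : |(0:ℝ)| ^ (1/β) = 0 := by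
      rw [abs_zero, Real.zero_rpow (by positivity : (1:ℝ)/β ≠ 0)]
    rw [habs, mul_zero]
    rw [hasDerivAt_iff_tendsto_slope]
    have hslope : ∀ t : ℝ, t ≠ 0 → slope (sfun β) 0 t = |t| ^ (1/β) := by
      intro t ht
      rw [slope_def_field, sfun]
      have : sfun β 0 = 0 := by simp [sfun]
      rw [this]
      field_simp
      ring
    have hcont : Filter.Tendsto (fun t : ℝ => |t| ^ (1/β)) (nhds 0) (nhds 0) := by
      have : Filter.Tendsto (fun t : ℝ => |t| ^ (1/β)) (nhds 0) (nhds (|(0:ℝ)| ^ (1/β))) := by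
        apply ContinuousAt.tendsto
        exact (continuous_abs.continuousAt).rpow_const (Or.inr (by positivity))
      rwa [habs] at this
    refine (hcont.mono_left nhdsWithin_le_nhds).congr' ?_
    filter_upwards [self_mem_nhdsWithin] with t ht
    exact (hslope t ht).symm
  · have h : HasDerivAt (fun t : ℝ => t ^ (1 + 1/β)) ((1 + 1/β) * x ^ (1/β)) x := by
      have h2 := Real.hasDerivAt_rpow_const (p := 1 + 1/β) (Or.inl hx.ne')
      convert h2 using 1
      have : x ^ (1 + 1/β - 1) = x ^ (1/β) := by ring_nf
      rw [this]
    have heq : sfun β =ᶠ[nhds x] (fun t : ℝ => t ^ (1 + 1/β)) := by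
      filter_upwards [eventually_gt_nhds hx] with t ht
      rw [sfun_of_nonneg hβ ht.le]
    rw [abs_of_pos hx]
    exact h.congr_of_eventuallyEq heq

lemma integral_sfun {β : ℝ} (hβ : 0 < β) (a b : ℝ) :
    ∫ t in a..b, (1 + 1/β) * |t| ^ (1/β) = sfun β b - sfun β a := by
  apply intervalIntegral.integral_eq_sub_of_hasDerivAt
  · exact fun t _ => hasDerivAt_sfun hβ t
  · apply Continuous.intervalIntegrable
    exact continuous_const.mul (continuous_abs.rpow_const (fun t => Or.inr (by positivity)))

lemma holder_bound {β H : ℝ} (hβ : 0 < β) (E : ℝ → ℝ) (hE : ContDiff ℝ 1 E)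
    (hH : ∀ x y : ℝ, |deriv E x - deriv E y| ≤ H * |x - y| ^ (1/β))
    {a b : ℝ} (hab : a ≤ b) :
    |(E b - E a) - deriv E 0 * (b - a)| ≤ β/(β+1) * H * (sfun β b - sfun β a) := by
  have hcd : Continuous (deriv E) := hE.continuous_deriv le_rfl
  have h1 : ∫ t in a..b, deriv E t = E b - E a :=
    intervalIntegral.integral_eq_sub_of_hasDerivAt
      (fun t _ => ((hE.differentiable one_ne_zero) t).hasDerivAt)
      (hcd.intervalIntegrable a b)
  have h2 : (E b - E a) - deriv E 0 * (b - a) = ∫ t in a..b, (deriv E t - deriv E 0) := by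
    rw [intervalIntegral.integral_sub (hcd.intervalIntegrable a b) intervalIntegrable_const,
      h1, intervalIntegral.integral_const]
    simp [smul_eq_mul]; ring
  rw [h2]
  have hcont : Continuous (fun t : ℝ => H * |t| ^ (1/β)) :=
    continuous_const.mul (continuous_abs.rpow_const (fun t => Or.inr (by positivity)))
  calc |∫ t in a..b, (deriv E t - deriv E 0)|
      ≤ ∫ t in a..b, |deriv E t - deriv E 0| :=
        intervalIntegral.abs_integral_le_integral_abs hab
    _ ≤ ∫ t in a..b, H * |t| ^ (1/β) := by
        apply intervalIntegral.integral_mono_on hab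
          ((hcd.sub continuous_const).abs.intervalIntegrable a b)
          (hcont.intervalIntegrable a b)
        intro t _
        simpa using hH t 0
    _ = β/(β+1) * H * (sfun β b - sfun β a) := by
        have heq : ∀ t : ℝ, H * |t| ^ (1/β) = (β/(β+1) * H) * ((1 + 1/β) * |t| ^ (1/β)) := by
          intro t
          have hβ1 : β + 1 ≠ 0 := by positivity
          field_simp
        rw [intervalIntegral.integral_congr (fun t _ => heq t),
          intervalIntegral.integral_const_mul, integral_sfun hβ]

noncomputable def Ffun (β C : ℝ) (E : ℝ → ℝ) (x : ℝ) : ℝ :=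
  C * sfun β x + (E x - E 0 - deriv E 0 * x)


set_option maxHeartbeats 1000000

/-- Stable shock profile for Burgers, `β ≥ 1`. For `β ≥ 1`,
`C > 0`, a `C¹` perturbation `E` with `E' 0 < 1` and Hölder-`1/β` constant
`H < (1+1/β)·C` for `E'`, data `w₀ x = -x + C·x·|x|^(1/β) + E x`,
`Tstar = 1/(1 - E' 0)` and `ystar = E 0/(1 - E' 0)`, there is `b : ℝ → ℝ` such
that for every `x`, with `y := x + Tstar·w₀ x`,
`w₀ x = E 0 - sgn (y - ystar)·b y·|y - ystar|^(β/(β+1)) + (1 - E' 0)·(y - ystar)`,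
and `b` is bounded below and above by the stated cusp-coefficient bounds. -/
theorem burgers_stable_shock_profile (β C : ℝ) (hβ : 1 ≤ β) (hC : 0 < C)
    (E : ℝ → ℝ) (hE : ContDiff ℝ 1 E) (hE0 : deriv E 0 < 1)
    (H : ℝ) (hH : ∀ x y : ℝ, |deriv E x - deriv E y| ≤ H * |x - y| ^ (1/β))
    (hHC : H < (1 + 1/β) * C)
    (w₀ : ℝ → ℝ) (hw₀ : ∀ x : ℝ, w₀ x = -x + C * x * |x| ^ (1/β) + E x)
    (Tstar ystar : ℝ)
    (hT : Tstar = 1 / (1 - deriv E 0)) (hy : ystar = E 0 / (1 - deriv E 0)) :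
    ∃ b : ℝ → ℝ,
      (∀ x : ℝ,
        w₀ x = E 0
          - Real.sign (x + Tstar * w₀ x - ystar) * b (x + Tstar * w₀ x)
              * |x + Tstar * w₀ x - ystar| ^ (β/(β+1))
          + (1 - deriv E 0) * (x + Tstar * w₀ x - ystar)) ∧
      (∀ y : ℝ,
        (1 - deriv E 0) ^ ((2*β+1)/(β+1)) / (C + β/(β+1) * H) ^ (β/(β+1)) ≤ b y ∧
        b y ≤ (1 - deriv E 0) ^ ((2*β+1)/(β+1)) / (C - β/(β+1) * H) ^ (β/(β+1))) := by
  have hβ0 : (0:ℝ) < β := by linarith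
  have hβ1 : (0:ℝ) < β + 1 := by linarith
  have hd : (0:ℝ) < 1 - deriv E 0 := by linarith
  have hd0 : (1:ℝ) - deriv E 0 ≠ 0 := ne_of_gt hd
  have hq : (0:ℝ) < β/(β+1) := by positivity
  have hH0 : (0:ℝ) ≤ H := by
    have h1 := hH 1 0
    have h2 : |(1:ℝ) - 0| ^ (1/β) = 1 := by norm_num
    rw [h2, mul_one] at h1
    exact le_trans (abs_nonneg _) h1
  have hK0 : (0:ℝ) ≤ β/(β+1) * H := by positivity
  have hKC : β/(β+1) * H < C := by
    have h1 : β/(β+1) * H < β/(β+1) * ((1 + 1/β) * C) :=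
      mul_lt_mul_of_pos_left hHC hq
    have h2 : β/(β+1) * ((1 + 1/β) * C) = C := by field_simp
    linarith
  have s0 : sfun β 0 = 0 := by simp [sfun]
  have smono := sfun_strictMono hβ0
  -- Hölder-type bound on the E-part of F
  have hFd : ∀ x : ℝ, |E x - E 0 - deriv E 0 * x| ≤ β/(β+1) * H * |sfun β x| := by
    intro x
    rcases le_or_gt 0 x with hx | hx
    · have h := holder_bound hβ0 E hE hH hx
      rw [s0] at h
      have hs : 0 ≤ sfun β x := by
        have := smono.monotone hx; rwa [s0] at this
      rw [abs_of_nonneg hs]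
      have e1 : E x - E 0 - deriv E 0 * x = (E x - E 0) - deriv E 0 * (x - 0) := by ring
      rw [e1]
      calc |(E x - E 0) - deriv E 0 * (x - 0)| ≤ β/(β+1) * H * (sfun β x - 0) := h
        _ = β/(β+1) * H * sfun β x := by ring
    · have h := holder_bound hβ0 E hE hH hx.le
      rw [s0] at h
      have hs : sfun β x < 0 := by
        have := smono hx; rwa [s0] at this
      rw [abs_of_neg hs]
      have e1 : E x - E 0 - deriv E 0 * x = -((E 0 - E x) - deriv E 0 * (0 - x)) := by ring
      rw [e1, abs_neg]
      calc |(E 0 - E x) - deriv E 0 * (0 - x)| ≤ β/(β+1) * H * (0 - sfun β x) := h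
        _ = β/(β+1) * H * -sfun β x := by ring
  -- F is strictly monotone
  have hFmono : StrictMono (Ffun β C E) := by
    intro a b hab
    have h := holder_bound hβ0 E hE hH hab.le
    have hs := smono hab
    have habs := abs_le.mp h
    have hCK : 0 < C - β/(β+1) * H := by linarith
    have : 0 < (C - β/(β+1) * H) * (sfun β b - sfun β a) :=
      mul_pos hCK (by linarith)
    simp only [Ffun]
    nlinarith
  -- the y-map
  have hYF : ∀ x : ℝ, x + Tstar * w₀ x - ystar = Ffun β C E x / (1 - deriv E 0) := by
    intro x
    rw [hT, hy, hw₀ x]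
    simp only [Ffun, sfun]
    field_simp
    ring
  have hYinj : ∀ a b : ℝ, a + Tstar * w₀ a = b + Tstar * w₀ b → a = b := by
    intro a b hab
    apply hFmono.injective
    have h1 := hYF a
    have h2 := hYF b
    rw [hab, h2] at h1
    field_simp at h1
    exact h1.symm
  -- bounds and sign of F
  have hpack : ∀ x : ℝ, x ≠ 0 →
      (C - β/(β+1) * H) * |sfun β x| ≤ |Ffun β C E x| ∧
      |Ffun β C E x| ≤ (C + β/(β+1) * H) * |sfun β x| ∧
      (0 < x → 0 < Ffun β C E x) ∧ (x < 0 → Ffun β C E x < 0) := by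
    intro x hx
    have he := abs_le.mp (hFd x)
    have hCK : 0 < C - β/(β+1) * H := by linarith
    rcases lt_or_gt_of_ne hx with hxneg | hxpos
    · have hs : sfun β x < 0 := by have := smono hxneg; rwa [s0] at this
      rw [abs_of_neg hs] at he ⊢
      have hF : Ffun β C E x < 0 := by
        simp only [Ffun]; nlinarith
      rw [abs_of_neg hF]
      refine ⟨by simp only [Ffun] at *; nlinarith, by simp only [Ffun] at *; nlinarith,
        fun h => absurd h (by linarith), fun _ => hF⟩
    · have hs : 0 < sfun β x := by have := smono hxpos; rwa [s0] at this
      rw [abs_of_pos hs] at he ⊢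
      have hF : 0 < Ffun β C E x := by
        simp only [Ffun]; nlinarith
      rw [abs_of_pos hF]
      refine ⟨by simp only [Ffun] at *; nlinarith, by simp only [Ffun] at *; nlinarith,
        fun _ => hF, fun h => absurd h (by linarith)⟩
  classical
  have hCK : (0:ℝ) < C - β/(β+1) * H := by linarith
  have hpq : (1 + 1/β) * (β/(β+1)) = 1 := by field_simp
  have hsabs : ∀ x : ℝ, |sfun β x| = |x| ^ (1 + 1/β) := by
    intro x
    rw [sfun, abs_mul, abs_of_nonneg (Real.rpow_nonneg (abs_nonneg x) _),
      Real.rpow_add' (abs_nonneg x) (by positivity : (1:ℝ) + 1/β ≠ 0), Real.rpow_one]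
  have hethe : (2*β+1)/(β+1) = 1 + β/(β+1) := by field_simp; ring
  have hdq : (1 - deriv E 0) ^ ((2*β+1)/(β+1))
      = (1 - deriv E 0) * (1 - deriv E 0) ^ (β/(β+1)) := by
    rw [hethe, Real.rpow_add hd, Real.rpow_one]
  refine ⟨fun y => if h : ∃ x, x ≠ 0 ∧ x + Tstar * w₀ x = y then
      (1 - deriv E 0) * h.choose * Real.sign (y - ystar) / |y - ystar| ^ (β/(β+1))
    else (1 - deriv E 0) ^ ((2*β+1)/(β+1)) / (C + β/(β+1) * H) ^ (β/(β+1)), ?_, ?_⟩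
  · -- part (i)
    intro x
    by_cases hx : x = 0
    · subst hx
      have hF0 : Ffun β C E 0 = 0 := by simp [Ffun, s0]
      rw [hYF 0, hF0, zero_div, Real.sign_zero]
      rw [hw₀ 0]
      simp
    · have hex : ∃ x', x' ≠ 0 ∧ x' + Tstar * w₀ x' = x + Tstar * w₀ x := ⟨x, hx, rfl⟩
      simp only [dif_pos hex]
      have hxx : hex.choose = x := hYinj _ _ hex.choose_spec.2
      rw [hxx]
      have hFx0 : Ffun β C E x ≠ 0 := by
        rcases lt_or_gt_of_ne hx with h | h
        · exact ne_of_lt ((hpack x hx).2.2.2 h)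
        · exact ne_of_gt ((hpack x hx).2.2.1 h)
      have hu0 : Ffun β C E x / (1 - deriv E 0) ≠ 0 := div_ne_zero hFx0 hd0
      rw [hYF x]
      have hA : (0:ℝ) < |Ffun β C E x / (1 - deriv E 0)| ^ (β/(β+1)) :=
        Real.rpow_pos_of_pos (abs_pos.mpr hu0) _
      have hsgn : Real.sign (Ffun β C E x / (1 - deriv E 0)) *
          Real.sign (Ffun β C E x / (1 - deriv E 0)) = 1 := by
        rcases hu0.lt_or_gt with h | h
        · rw [Real.sign_of_neg h]; norm_num
        · rw [Real.sign_of_pos h]; norm_num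
      have hterm : Real.sign (Ffun β C E x / (1 - deriv E 0)) *
          ((1 - deriv E 0) * x * Real.sign (Ffun β C E x / (1 - deriv E 0)) /
            |Ffun β C E x / (1 - deriv E 0)| ^ (β/(β+1))) *
          |Ffun β C E x / (1 - deriv E 0)| ^ (β/(β+1)) = (1 - deriv E 0) * x := by
        field_simp
        linear_combination hsgn
      rw [hterm, hw₀ x]
      have hdc : (1 - deriv E 0) * (Ffun β C E x / (1 - deriv E 0)) = Ffun β C E x := by
        field_simp
      rw [hdc]
      simp only [Ffun, sfun]
      ring
  · -- part (ii)
    intro y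
    by_cases hex : ∃ x, x ≠ 0 ∧ x + Tstar * w₀ x = y
    · simp only [dif_pos hex]
      obtain ⟨hx0, hxy⟩ := hex.choose_spec
      have hu : y - ystar = Ffun β C E hex.choose / (1 - deriv E 0) := by
        rw [← hYF hex.choose, hxy]
      obtain ⟨hlow, hupp, hposF, hnegF⟩ := hpack hex.choose hx0
      have hxabs : (0:ℝ) < |hex.choose| := abs_pos.mpr hx0
      have hxsgn : hex.choose * Real.sign (y - ystar) = |hex.choose| := by
        rw [hu]
        rcases lt_or_gt_of_ne hx0 with h | h
        · rw [Real.sign_of_neg (div_neg_of_neg_of_pos (hnegF h) hd), abs_of_neg h]; ring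
        · rw [Real.sign_of_pos (div_pos (hposF h) hd), abs_of_pos h]; ring
      have hFx0 : Ffun β C E hex.choose ≠ 0 := by
        rcases lt_or_gt_of_ne hx0 with h | h
        · exact ne_of_lt (hnegF h)
        · exact ne_of_gt (hposF h)
      have hFq : (0:ℝ) < |Ffun β C E hex.choose| ^ (β/(β+1)) :=
        Real.rpow_pos_of_pos (abs_pos.mpr hFx0) _
      have habsu : |y - ystar| ^ (β/(β+1))
          = |Ffun β C E hex.choose| ^ (β/(β+1)) / (1 - deriv E 0) ^ (β/(β+1)) := by
        rw [hu, abs_div, abs_of_pos hd, Real.div_rpow (abs_nonneg _) hd.le]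
      have hby : (1 - deriv E 0) * hex.choose * Real.sign (y - ystar) / |y - ystar| ^ (β/(β+1))
          = (1 - deriv E 0) * (1 - deriv E 0) ^ (β/(β+1)) * |hex.choose|
              / |Ffun β C E hex.choose| ^ (β/(β+1)) := by
        rw [habsu, mul_assoc, hxsgn, div_div_eq_mul_div]
        ring
      have hFqlow : (C - β/(β+1)*H) ^ (β/(β+1)) * |hex.choose|
          ≤ |Ffun β C E hex.choose| ^ (β/(β+1)) := by
        have h1 : ((C - β/(β+1)*H) * |sfun β hex.choose|) ^ (β/(β+1))
            ≤ |Ffun β C E hex.choose| ^ (β/(β+1)) :=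
          Real.rpow_le_rpow (by positivity) hlow hq.le
        rwa [Real.mul_rpow hCK.le (abs_nonneg _), hsabs,
          ← Real.rpow_mul (abs_nonneg hex.choose), hpq, Real.rpow_one] at h1
      have hFqupp : |Ffun β C E hex.choose| ^ (β/(β+1))
          ≤ (C + β/(β+1)*H) ^ (β/(β+1)) * |hex.choose| := by
        have h1 : |Ffun β C E hex.choose| ^ (β/(β+1))
            ≤ ((C + β/(β+1)*H) * |sfun β hex.choose|) ^ (β/(β+1)) :=
          Real.rpow_le_rpow (abs_nonneg _) hupp hq.le
        rwa [Real.mul_rpow (by linarith) (abs_nonneg _), hsabs,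
          ← Real.rpow_mul (abs_nonneg hex.choose), hpq, Real.rpow_one] at h1
      have hDpos : (0:ℝ) < (1 - deriv E 0) * (1 - deriv E 0) ^ (β/(β+1)) :=
        mul_pos hd (Real.rpow_pos_of_pos hd _)
      have hCKq : (0:ℝ) < (C - β/(β+1)*H) ^ (β/(β+1)) := Real.rpow_pos_of_pos hCK _
      have hCKq' : (0:ℝ) < (C + β/(β+1)*H) ^ (β/(β+1)) :=
        Real.rpow_pos_of_pos (by linarith) _
      rw [hby, hdq]
      constructor
      · rw [div_le_div_iff₀ hCKq' hFq]
        nlinarith [mul_le_mul_of_nonneg_left hFqupp hDpos.le]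
      · rw [div_le_div_iff₀ hFq hCKq]
        nlinarith [mul_le_mul_of_nonneg_left hFqlow hDpos.le]
    · simp only [dif_neg hex]
      refine ⟨le_rfl, ?_⟩
      have h1 : (0:ℝ) < (C - β/(β+1)*H) ^ (β/(β+1)) := Real.rpow_pos_of_pos hCK _
      have h2 : (C - β/(β+1)*H) ^ (β/(β+1)) ≤ (C + β/(β+1)*H) ^ (β/(β+1)) :=
        Real.rpow_le_rpow hCK.le (by linarith) hq.le
      have h3 : (0:ℝ) ≤ (1 - deriv E 0) ^ ((2*β+1)/(β+1)) :=
        (Real.rpow_pos_of_pos hd _).le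
      gcongr
end

section
/- Let 0 < β < 1 and write 1 + 1/β = n + δ with n a positive integer and δ ∈ (0,1]. Let E : ℝ → ℝ be n times continuously differentiable with [∂ⁿE]_{C^{0,δ}} < ∞ and with ∂ʲE(0) = 0 for every integer 2 ≤ j ≤ n. Then for all x ∈ ℝ, |E(x) − E(0) − E'(0)·x| ≤ ([∂ⁿE]_{C^{0,δ}} / ∏_{j=0}^{n−1}(1 + 1/β − j)) · |x|^{1+1/β}. Equivalently, writing E(x) = E(0) + E'(0)·x + h(x)·x·|x|^{1/β} for x ≠ 0, the function h satisfies |h(x)| ≤ [∂ⁿE]_{C^{0,δ}} / ∏_{j=0}^{n−1}(1 + 1/β − j) for all x ≠ 0. -/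
open Real

lemma int_bound_nonneg (p K : ℝ) (hp : 0 ≤ p) (hK : 0 ≤ K) (G : ℝ → ℝ)
    (hG : Differentiable ℝ G) (hG' : Continuous (deriv G)) (hG0 : G 0 = 0)
    (hbd : ∀ t, |deriv G t| ≤ K * |t| ^ p) :
    ∀ x : ℝ, 0 ≤ x → |G x| ≤ K / (p + 1) * |x| ^ (p + 1) := by
  intro x hx
  have hp1 : (0:ℝ) < p + 1 := by linarith
  have key : ∫ t in (0:ℝ)..x, deriv G t = G x - G 0 :=
    intervalIntegral.integral_deriv_eq_sub (fun t _ => (hG t))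
      (hG'.intervalIntegrable _ _)
  have hGx : G x = ∫ t in (0:ℝ)..x, deriv G t := by rw [key, hG0, sub_zero]
  have int1 : IntervalIntegrable (fun t => ‖deriv G t‖) MeasureTheory.volume 0 x :=
    (hG'.norm).intervalIntegrable _ _
  have int2 : IntervalIntegrable (fun t => K * t ^ p) MeasureTheory.volume 0 x :=
    (intervalIntegral.intervalIntegrable_rpow (Or.inl (by linarith))).const_mul K
  calc |G x| = ‖∫ t in (0:ℝ)..x, deriv G t‖ := by rw [hGx]; rfl
    _ ≤ ∫ t in (0:ℝ)..x, ‖deriv G t‖ := intervalIntegral.norm_integral_le_integral_norm hx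
    _ ≤ ∫ t in (0:ℝ)..x, K * t ^ p := by
        apply intervalIntegral.integral_mono_on hx int1 int2
        intro t ht
        have ht0 : 0 ≤ t := ht.1
        calc ‖deriv G t‖ = |deriv G t| := rfl
          _ ≤ K * |t| ^ p := hbd t
          _ = K * t ^ p := by rw [abs_of_nonneg ht0]
    _ = K * ((x ^ (p+1) - (0:ℝ) ^ (p+1)) / (p+1)) := by
        rw [intervalIntegral.integral_const_mul, integral_rpow (Or.inl (by linarith))]
    _ = K / (p + 1) * |x| ^ (p + 1) := by
        rw [Real.zero_rpow (ne_of_gt hp1), abs_of_nonneg hx]; ring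

lemma int_bound (p K : ℝ) (hp : 0 ≤ p) (hK : 0 ≤ K) (G : ℝ → ℝ)
    (hG : Differentiable ℝ G) (hG' : Continuous (deriv G)) (hG0 : G 0 = 0)
    (hbd : ∀ t, |deriv G t| ≤ K * |t| ^ p) :
    ∀ x : ℝ, |G x| ≤ K / (p + 1) * |x| ^ (p + 1) := by
  intro x
  rcases le_or_gt 0 x with hx | hx
  · exact int_bound_nonneg p K hp hK G hG hG' hG0 hbd x hx
  · set G2 : ℝ → ℝ := fun t => G (-t) with hG2def
    have hG2 : Differentiable ℝ G2 := hG.comp differentiable_neg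
    have hderiv2 : deriv G2 = fun t => -(deriv G (-t)) := by
      funext t; exact deriv_comp_neg G t
    have hG2' : Continuous (deriv G2) := by
      rw [hderiv2]; exact (hG'.comp continuous_neg).neg
    have hbd2 : ∀ t, |deriv G2 t| ≤ K * |t| ^ p := by
      intro t; rw [hderiv2]
      simpa [abs_neg] using hbd (-t)
    have := int_bound_nonneg p K hp hK G2 hG2 hG2' (by simp [hG2def, hG0]) hbd2 (-x)
      (by linarith)
    simpa [hG2def, abs_neg] using this

lemma taylor_aux (δ : ℝ) (hδ0 : 0 < δ) :
    ∀ m : ℕ, ∀ C : ℝ, 0 ≤ C → ∀ G : ℝ → ℝ, ContDiff ℝ m G →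
      (∀ j, j ≤ m → iteratedDeriv j G 0 = 0) →
      (∀ x, |iteratedDeriv m G x| ≤ C * |x| ^ δ) →
      ∀ x : ℝ, |G x| ≤ C / (∏ i ∈ Finset.range m, (δ + i + 1)) * |x| ^ (δ + m) := by
  intro m
  induction m with
  | zero =>
    intro C hC G _ _ hbd x
    simpa using hbd x
  | succ m IH =>
    intro C hC G hG h0 hbd x
    have hG1 : ContDiff ℝ ((m : WithTop ℕ∞) + 1) G := by exact_mod_cast hG
    obtain ⟨hdiff, -, hG'⟩ := contDiff_succ_iff_deriv.mp hG1
    have hPpos : 0 < ∏ i ∈ Finset.range m, (δ + (i:ℝ) + 1) := by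
      apply Finset.prod_pos
      intro i _
      have : (0:ℝ) ≤ i := Nat.cast_nonneg i
      linarith
    have ihyp := IH C hC (deriv G) hG'
      (fun j hj => by
        rw [← iteratedDeriv_succ']
        exact h0 (j + 1) (Nat.succ_le_succ hj))
      (fun y => by
        rw [← iteratedDeriv_succ']
        exact hbd y)
    have hKnonneg : 0 ≤ C / (∏ i ∈ Finset.range m, (δ + (i:ℝ) + 1)) :=
      div_nonneg hC hPpos.le
    have hcont : Continuous (deriv G) := hG'.continuous
    have hbound := int_bound (δ + m) (C / (∏ i ∈ Finset.range m, (δ + (i:ℝ) + 1)))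
      (by positivity) hKnonneg G hdiff hcont (h0 0 (Nat.zero_le _))
      (fun t => ihyp t) x
    have heq : δ + ((m:ℝ) + 1) = (δ + m) + 1 := by ring
    have hcast : ((m + 1 : ℕ) : ℝ) = (m : ℝ) + 1 := by push_cast; ring
    rw [hcast, heq]
    calc |G x| ≤ C / (∏ i ∈ Finset.range m, (δ + (i:ℝ) + 1)) / (δ + ↑m + 1)
          * |x| ^ (δ + ↑m + 1) := hbound
      _ = C / (∏ i ∈ Finset.range (m+1), (δ + (i:ℝ) + 1)) * |x| ^ (δ + ↑m + 1) := by
          rw [Finset.prod_range_succ, div_div]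

lemma iter_const_add (k : ℕ) (hk : 0 < k) (c : ℝ) (f : ℝ → ℝ) (x : ℝ) :
    iteratedDeriv k (fun z => c + f z) x = iteratedDeriv k f x := by
  simp only [← iteratedDerivWithin_univ]
  exact iteratedDerivWithin_const_add hk c

/-- Let `0 < β < 1` with `1 + 1/β = n + δ`, `n` a positive
integer, `δ ∈ (0,1]`.  If `E` is `n` times continuously differentiable, its
`n`-th derivative has Hölder-`δ` constant `H`, and `∂ʲE(0) = 0` for
`2 ≤ j ≤ n`, then `|E x - E 0 - E' 0 · x| ≤ (H / ∏_{j<n} (1 + 1/β - j))·|x|^(1+1/β)`;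
equivalently, writing `E x = E 0 + E' 0·x + h(x)·x·|x|^(1/β)` for `x ≠ 0`,
`|h x| ≤ H / ∏_{j<n} (1 + 1/β - j)`. -/
theorem higher_order_taylor_holder_bound (β : ℝ) (hβ0 : 0 < β) (hβ1 : β < 1)
    (n : ℕ) (hn : 0 < n) (δ : ℝ) (hδ : δ ∈ Set.Ioc (0:ℝ) 1)
    (hnδ : 1 + 1/β = n + δ)
    (E : ℝ → ℝ) (hE : ContDiff ℝ n E)
    (H : ℝ) (hH0 : 0 ≤ H)
    (hH : ∀ x y : ℝ, |iteratedDeriv n E x - iteratedDeriv n E y| ≤ H * |x - y| ^ δ)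
    (hE0 : ∀ j : ℕ, 2 ≤ j → j ≤ n → iteratedDeriv j E 0 = 0) :
    (∀ x : ℝ, |E x - E 0 - deriv E 0 * x|
        ≤ H / (∏ j ∈ Finset.range n, (1 + 1/β - (j:ℝ))) * |x| ^ (1 + 1/β)) ∧
    (∀ x : ℝ, x ≠ 0 →
        |(E x - E 0 - deriv E 0 * x) / (x * |x| ^ (1/β))|
          ≤ H / (∏ j ∈ Finset.range n, (1 + 1/β - (j:ℝ)))) := by
  obtain ⟨hδ0, hδ1⟩ := hδ
  have hβinv : 1 < 1/β := by
    rw [lt_div_iff₀ hβ0]; linarith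
  -- n ≥ 2
  have hn2 : 2 ≤ n := by
    by_contra h
    interval_cases n
    · have : (1:ℝ) + 1/β = 1 + δ := by push_cast at hnδ; linarith
      linarith
  -- exponent identity
  have hexp : δ + (n:ℝ) = 1 + 1/β := by linarith
  -- product identity
  have hprod : ∏ j ∈ Finset.range n, (1 + 1/β - (j:ℝ))
      = ∏ i ∈ Finset.range n, (δ + (i:ℝ) + 1) := by
    rw [← Finset.prod_range_reflect (fun i => δ + (i:ℝ) + 1) n]
    apply Finset.prod_congr rfl
    intro j hj
    have hj' := Finset.mem_range.mp hj
    have hcast : ((n - 1 - j : ℕ) : ℝ) = (n:ℝ) - 1 - j := by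
      have h1 : n - 1 - j = n - (j + 1) := by omega
      rw [h1, Nat.cast_sub (by omega)]
      push_cast; ring
    simp only [hcast]
    rw [hnδ]; ring
  have hPpos : 0 < ∏ i ∈ Finset.range n, (δ + (i:ℝ) + 1) := by
    apply Finset.prod_pos
    intro i _
    have : (0:ℝ) ≤ i := Nat.cast_nonneg i
    linarith
  -- differentiability facts
  have hEdiff : Differentiable ℝ E := hE.differentiable (by exact_mod_cast hn.ne')
  -- F and its derivatives
  set F : ℝ → ℝ := fun x => E x - E 0 - deriv E 0 * x with hFdef
  have hF : ContDiff ℝ n F :=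
    (hE.sub contDiff_const).sub (contDiff_const.mul contDiff_id)
  have hderivF : deriv F = fun x => deriv E x - deriv E 0 := by
    funext x
    have h1 : HasDerivAt E (deriv E x) x := (hEdiff x).hasDerivAt
    have h2 : HasDerivAt (fun y : ℝ => deriv E 0 * y) (deriv E 0 * 1) x :=
      (hasDerivAt_id x).const_mul (deriv E 0)
    have h3 : HasDerivAt F (deriv E x - deriv E 0 * 1) x :=
      (h1.sub_const (E 0)).sub h2
    simpa using h3.deriv
  -- iterated derivatives of F of order ≥ 2 agree with those of E
  have hiter : ∀ k : ℕ, 1 ≤ k → iteratedDeriv (k + 1) F = iteratedDeriv (k + 1) E := by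
    intro k hk
    funext x
    rw [iteratedDeriv_succ', hderivF]
    have : (fun x => deriv E x - deriv E 0) = fun x => (-(deriv E 0)) + deriv E x := by
      funext y; ring
    rw [this, iter_const_add k hk _ _ x, ← iteratedDeriv_succ']
  -- hypotheses of taylor_aux for F
  have h0F : ∀ j, j ≤ n → iteratedDeriv j F 0 = 0 := by
    intro j hj
    match j with
    | 0 => simp [hFdef]
    | 1 => rw [iteratedDeriv_one, hderivF]; ring
    | (k + 2) =>
      rw [show k + 2 = (k + 1) + 1 by ring, hiter (k+1) (by omega)]
      exact hE0 (k + 2) (by omega) hj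
  have hbdF : ∀ x, |iteratedDeriv n F x| ≤ H * |x| ^ δ := by
    intro x
    obtain ⟨k, rfl⟩ : ∃ k, n = k + 2 := ⟨n - 2, by omega⟩
    rw [show k + 2 = (k + 1) + 1 by ring, hiter (k+1) (by omega)]
    have h0 : iteratedDeriv (k + 1 + 1) E 0 = 0 := hE0 _ (by omega) le_rfl
    have := hH x 0
    rw [h0, sub_zero, sub_zero] at this
    exact this
  have hmain := taylor_aux δ hδ0 n H hH0 F hF h0F hbdF
  rw [hexp] at hmain
  rw [hprod]
  constructor
  · exact hmain
  · intro x hx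
    have hxabs : 0 < |x| := abs_pos.mpr hx
    have hxpow : |x * |x| ^ (1/β)| = |x| ^ (1 + 1/β) := by
      rw [abs_mul, abs_of_nonneg (rpow_nonneg (abs_nonneg x) _),
        Real.rpow_add hxabs, Real.rpow_one]
    have hpowpos : 0 < |x| ^ (1 + 1/β) := rpow_pos_of_pos hxabs _
    rw [abs_div, hxpow, div_le_iff₀ hpowpos]
    exact hmain x
end

section
/- (Finite-codimension stable shock profile for Burgers, 0 < β < 1.) Let 0 < β < 1, C > 0, and write 1 + 1/β = n + δ with n a positive integer and δ ∈ (0,1]; set P := ∏_{j=0}^{n−1}(1 + 1/β − j). Let E : ℝ → ℝ be n times continuously differentiable with E'(0) < 1, [∂ⁿE]_{C^{0,δ}} < C·P, and ∂ʲE(0) = 0 for every integer 2 ≤ j ≤ n. Define w₀(x) = −x + C·x·|x|^{1/β} + E(x), T₊ := 1/(1 − E'(0)), and y₊ := E(0)/(1 − E'(0)). Then there exists a function b : ℝ → ℝ such that: (i) for every x ∈ ℝ, setting y := x + T₊·w₀(x), one has sgn(y − y₊) = sgn(x) and w₀(x) = E(0) − sgn(y − y₊)·b(y)·|y − y₊|^{β/(β+1)}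 + (1 − E'(0))·(y − y₊); and (ii) for all y ∈ ℝ, (1 − E'(0))^{(2β+1)/(β+1)} / (C + [∂ⁿE]_{C^{0,δ}}/P)^{β/(β+1)} ≤ b(y) ≤ (1 − E'(0))^{(2β+1)/(β+1)} / (C − [∂ⁿE]_{C^{0,δ}}/P)^{β/(β+1)}. -/
open Real

lemma integ_nonneg (f f' : ℝ → ℝ) (hd : ∀ x, HasDerivAt f (f' x) x)
    (hc : Continuous f') (h0 : f 0 = 0) (M s : ℝ) (hs : 0 < s)
    (hb : ∀ t, |f' t| ≤ M * |t| ^ s) {x : ℝ} (hx : 0 ≤ x) :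
    |f x| ≤ M * |x| ^ (s + 1) / (s + 1) := by
  have habs : Continuous fun t : ℝ => M * |t| ^ s :=
    continuous_const.mul (continuous_abs.rpow_const (fun x => Or.inr hs.le))
  have hftc : ∫ t in (0:ℝ)..x, f' t = f x - f 0 :=
    intervalIntegral.integral_eq_sub_of_hasDerivAt (fun t _ => hd t)
      (hc.intervalIntegrable 0 x)
  have h1 : |∫ t in (0:ℝ)..x, f' t| ≤ ∫ t in (0:ℝ)..x, |f' t| :=
    intervalIntegral.abs_integral_le_integral_abs hx
  have h2 : (∫ t in (0:ℝ)..x, |f' t|) ≤ ∫ t in (0:ℝ)..x, M * |t| ^ s :=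
    intervalIntegral.integral_mono_on hx (hc.abs.intervalIntegrable 0 x)
      (habs.intervalIntegrable 0 x) (fun t _ => hb t)
  have h3 : (∫ t in (0:ℝ)..x, M * |t| ^ s) = M * |x| ^ (s + 1) / (s + 1) := by
    have hcong : (∫ t in (0:ℝ)..x, M * |t| ^ s) = ∫ t in (0:ℝ)..x, M * t ^ s := by
      apply intervalIntegral.integral_congr
      intro t ht
      rw [Set.uIcc_of_le hx] at ht
      show M * |t| ^ s = M * t ^ s
      rw [abs_of_nonneg ht.1]
    rw [hcong, intervalIntegral.integral_const_mul, integral_rpow (Or.inl (by linarith)),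
      Real.zero_rpow (by positivity), abs_of_nonneg hx]
    ring
  calc |f x| = |∫ t in (0:ℝ)..x, f' t| := by rw [hftc, h0, sub_zero]
    _ ≤ _ := h1.trans (h2.trans_eq h3)

lemma integ (f f' : ℝ → ℝ) (hd : ∀ x, HasDerivAt f (f' x) x)
    (hc : Continuous f') (h0 : f 0 = 0) (M s : ℝ) (hs : 0 < s)
    (hb : ∀ t, |f' t| ≤ M * |t| ^ s) (x : ℝ) :
    |f x| ≤ M * |x| ^ (s + 1) / (s + 1) := by
  rcases le_or_gt 0 x with hx | hx
  · exact integ_nonneg f f' hd hc h0 M s hs hb hx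
  · have hd' : ∀ u, HasDerivAt (fun u => f (-u)) (-f' (-u)) u := by
      intro u
      have h := (hd (-u)).comp u (hasDerivAt_neg u)
      simp at h; exact h
    have := integ_nonneg (fun u => f (-u)) (fun u => -f' (-u)) hd'
      (hc.comp continuous_neg).neg (by simpa using h0) M s hs
      (fun t => by simpa using hb (-t)) (x := -x) (by linarith)
    simpa using this

lemma hasDerivAt_mul_abs_rpow (r : ℝ) (hr : 0 < r) {x : ℝ} (hx : x ≠ 0) :
    HasDerivAt (fun t => t * |t| ^ r) ((r + 1) * |x| ^ r) x := by
  rcases hx.lt_or_gt with hx | hx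
  · have hder : HasDerivAt (fun t : ℝ => -((-t) ^ (r + 1))) ((r + 1) * |x| ^ r) x := by
      have h1 : HasDerivAt (fun t : ℝ => (-t) ^ (r + 1))
          ((r + 1) * (-x) ^ (r + 1 - 1) * (-1)) x :=
        (Real.hasDerivAt_rpow_const (x := -x) (p := r + 1)
          (Or.inl (by linarith))).comp x (hasDerivAt_neg x)
      have := h1.neg
      refine HasDerivAt.congr_deriv this ?_
      rw [abs_of_neg hx]
      ring_nf
    apply hder.congr_of_eventuallyEq
    filter_upwards [Iio_mem_nhds hx] with t ht
    have ht' : (0:ℝ) ≤ -t := by simp at ht ⊢; linarith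
    rw [abs_of_neg ht, Real.rpow_add' ht' (by linarith : r + 1 ≠ 0), Real.rpow_one]
    ring
  · have hder : HasDerivAt (fun t : ℝ => t ^ (r + 1)) ((r + 1) * |x| ^ r) x := by
      have h1 := Real.hasDerivAt_rpow_const (x := x) (p := r + 1) (Or.inl hx.ne')
      refine HasDerivAt.congr_deriv h1 ?_
      rw [abs_of_pos hx]
      ring_nf
    apply hder.congr_of_eventuallyEq
    filter_upwards [Ioi_mem_nhds hx] with t ht
    have ht' : (0:ℝ) ≤ t := le_of_lt ht
    rw [abs_of_pos ht, Real.rpow_add' ht' (by linarith : r + 1 ≠ 0), Real.rpow_one]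
    ring

set_option maxHeartbeats 2000000 in
/-- Finite-codimension stable shock profile for Burgers,
`0 < β < 1`. With `1 + 1/β = n + δ`, `P = ∏_{j<n} (1 + 1/β - j)`, and an
`n`-times continuously differentiable perturbation `E` with `E' 0 < 1`,
Hölder-`δ` constant `H < C·P` for `∂ⁿE`, and `∂ʲE(0) = 0` for `2 ≤ j ≤ n`, the
data `w₀ x = -x + C·x·|x|^(1/β) + E x` has, at `Tstar = 1/(1 - E' 0)` and
`ystar = E 0/(1 - E' 0)`, the cusp profile
`w₀ x = E 0 - sgn (y - ystar)·b y·|y - ystar|^(β/(β+1)) + (1 - E' 0)·(y - ystar)`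
with `y := x + Tstar·w₀ x`, `sgn (y - ystar) = sgn x`, and `b` bounded by the
stated cusp-coefficient bounds. -/
theorem burgers_finite_codim_shock_profile (β C : ℝ) (hβ0 : 0 < β) (hβ1 : β < 1)
    (hC : 0 < C)
    (n : ℕ) (hn : 0 < n) (δ : ℝ) (hδ : δ ∈ Set.Ioc (0:ℝ) 1)
    (hnδ : 1 + 1/β = n + δ)
    (P : ℝ) (hP : P = ∏ j ∈ Finset.range n, (1 + 1/β - (j:ℝ)))
    (E : ℝ → ℝ) (hE : ContDiff ℝ n E) (hE0 : deriv E 0 < 1)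
    (H : ℝ) (hH0 : 0 ≤ H)
    (hH : ∀ x y : ℝ, |iteratedDeriv n E x - iteratedDeriv n E y| ≤ H * |x - y| ^ δ)
    (hHC : H < C * P)
    (hEj : ∀ j : ℕ, 2 ≤ j → j ≤ n → iteratedDeriv j E 0 = 0)
    (w₀ : ℝ → ℝ) (hw₀ : ∀ x : ℝ, w₀ x = -x + C * x * |x| ^ (1/β) + E x)
    (Tstar ystar : ℝ)
    (hT : Tstar = 1 / (1 - deriv E 0)) (hy : ystar = E 0 / (1 - deriv E 0)) :
    ∃ b : ℝ → ℝ,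
      (∀ x : ℝ,
        Real.sign (x + Tstar * w₀ x - ystar) = Real.sign x ∧
        w₀ x = E 0
          - Real.sign (x + Tstar * w₀ x - ystar) * b (x + Tstar * w₀ x)
              * |x + Tstar * w₀ x - ystar| ^ (β/(β+1))
          + (1 - deriv E 0) * (x + Tstar * w₀ x - ystar)) ∧
      (∀ y : ℝ,
        (1 - deriv E 0) ^ ((2*β+1)/(β+1)) / (C + H / P) ^ (β/(β+1)) ≤ b y ∧
        b y ≤ (1 - deriv E 0) ^ ((2*β+1)/(β+1)) / (C - H / P) ^ (β/(β+1))) := by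
  classical
  obtain ⟨hδ0, hδ1⟩ := hδ
  have hβinv : 1 < 1/β := by rw [lt_div_iff₀ hβ0]; linarith
  have hn2 : 2 ≤ n := by
    have h1 : (1:ℝ) < (n:ℝ) := by linarith
    exact_mod_cast Nat.one_lt_cast.mp h1
  -- basic positivity
  have hδj : ∀ k : ℕ, (0:ℝ) < δ + k + 1 := fun k => by positivity
  have hQpos : ∀ k : ℕ, (0:ℝ) < ∏ i ∈ Finset.range k, (δ + i + 1) :=
    fun k => Finset.prod_pos (fun i _ => hδj i)
  have hPQ : P = ∏ i ∈ Finset.range n, (δ + i + 1) := by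
    rw [hP, ← Finset.prod_range_reflect]
    apply Finset.prod_congr rfl
    intro j hj
    have hj' : j < n := Finset.mem_range.mp hj
    have hcast : ((n - 1 - j : ℕ) : ℝ) = (n:ℝ) - 1 - j := by
      push_cast [Nat.cast_sub (by omega : 1 + j ≤ n), Nat.sub_sub]
      ring
    rw [hcast, hnδ]
    ring
  have hPpos : 0 < P := hPQ ▸ hQpos n
  -- Taylor chain
  have key : ∀ j : ℕ, j ≤ n - 2 → ∀ x : ℝ,
      |iteratedDeriv (n - j) E x| ≤ H / (∏ i ∈ Finset.range j, (δ + i + 1)) * |x| ^ (δ + j) := by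
    intro j
    induction j with
    | zero =>
      intro _ x
      simpa [hEj n hn2 le_rfl] using hH x 0
    | succ j ih =>
      intro hj x
      have IH := ih (by omega)
      have hm2 : 2 ≤ n - (j+1) := by omega
      have hmn : n - (j+1) < n := by omega
      have hdiff : Differentiable ℝ (iteratedDeriv (n - (j+1)) E) :=
        hE.differentiable_iteratedDeriv _ (by exact_mod_cast hmn)
      have hder : ∀ t, HasDerivAt (iteratedDeriv (n - (j+1)) E) (iteratedDeriv (n - j) E t) t := by
        intro t
        have h1 := (hdiff t).hasDerivAt
        have h2 : iteratedDeriv (n - j) E t = deriv (iteratedDeriv (n - (j+1)) E) t := by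
          rw [show n - j = (n - (j+1)) + 1 from by omega, iteratedDeriv_succ]
        rw [h2]; exact h1
      have hcont : Continuous (iteratedDeriv (n - j) E) :=
        hE.continuous_iteratedDeriv _ (by exact_mod_cast Nat.sub_le n j)
      have h0 : iteratedDeriv (n - (j+1)) E 0 = 0 := hEj _ hm2 (by omega)
      have hbound := integ (iteratedDeriv (n - (j+1)) E) (iteratedDeriv (n - j) E) hder hcont h0
        (H / (∏ i ∈ Finset.range j, (δ + i + 1))) (δ + j) (by positivity) IH x
      have hexp : δ + ((j+1 : ℕ) : ℝ) = (δ + j) + 1 := by push_cast; ring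
      rw [hexp, Finset.prod_range_succ]
      calc |iteratedDeriv (n - (j+1)) E x| ≤
          H / (∏ i ∈ Finset.range j, (δ + i + 1)) * |x| ^ (δ + j + 1) / (δ + j + 1) := hbound
        _ = H / ((∏ i ∈ Finset.range j, (δ + i + 1)) * (δ + j + 1)) * |x| ^ (δ + j + 1) := by
            rw [div_mul_eq_mul_div, div_div, div_mul_eq_mul_div]
  -- level 1 : the derivative
  have hEdiff : Differentiable ℝ E := hE.differentiable (by exact_mod_cast (by omega : n ≠ 0))
  have hd1 : ∀ t, HasDerivAt (fun x => deriv E x - deriv E 0) (iteratedDeriv 2 E t) t := by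
    intro t
    have hdiff : Differentiable ℝ (iteratedDeriv 1 E) :=
      hE.differentiable_iteratedDeriv 1 (by exact_mod_cast (by omega : 1 < n))
    have h1 := ((hdiff t).hasDerivAt).sub_const (deriv E 0)
    have h2 : iteratedDeriv 2 E t = deriv (iteratedDeriv 1 E) t := by
      rw [show (2:ℕ) = 1 + 1 from rfl, iteratedDeriv_succ]
    rw [h2]
    apply h1.congr_of_eventuallyEq
    filter_upwards with u
    rw [iteratedDeriv_one]
  have hkey2 := key (n - 2) le_rfl
  have hnn : n - (n - 2) = 2 := by omega
  rw [hnn] at hkey2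
  have hexp2 : δ + ((n - 2 : ℕ) : ℝ) = 1/β - 1 := by
    push_cast [Nat.cast_sub hn2]
    linarith
  have key1 : ∀ x : ℝ, |deriv E x - deriv E 0| ≤
      H / (∏ i ∈ Finset.range (n-1), (δ + i + 1)) * |x| ^ (1/β) := by
    intro x
    have hbound := integ (fun x => deriv E x - deriv E 0) (iteratedDeriv 2 E) hd1
      (hE.continuous_iteratedDeriv 2 (by exact_mod_cast hn2)) (by simp)
      (H / (∏ i ∈ Finset.range (n-2), (δ + i + 1))) (1/β - 1) (by linarith) (fun t => by
        have := hkey2 t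
        rwa [hexp2] at this) x
    have h3 : (1/β - 1) + 1 = 1/β := by ring
    rw [h3] at hbound
    refine hbound.trans (le_of_eq ?_)
    have hprod : (∏ i ∈ Finset.range (n-1), (δ + i + 1)) =
        (∏ i ∈ Finset.range (n-2), (δ + i + 1)) * (δ + ((n-2:ℕ):ℝ) + 1) := by
      rw [show n - 1 = (n - 2) + 1 from by omega, Finset.prod_range_succ]
    rw [hprod, hexp2]
    have h4 : (1/β - 1) + 1 = 1/β := by ring
    rw [div_mul_eq_mul_div, div_div, div_mul_eq_mul_div, h4]
  -- level 0 : the function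
  have hd0 : ∀ t, HasDerivAt (fun x => E x - E 0 - deriv E 0 * x) (deriv E t - deriv E 0) t := by
    intro t
    have h1 := ((hEdiff t).hasDerivAt.sub_const (E 0)).sub
      ((hasDerivAt_id t).const_mul (deriv E 0))
    rw [mul_one] at h1; exact h1
  have keyR : ∀ x : ℝ, |E x - E 0 - deriv E 0 * x| ≤ H / P * |x| ^ (1 + 1/β) := by
    intro x
    have hbound := integ (fun x => E x - E 0 - deriv E 0 * x) (fun t => deriv E t - deriv E 0)
      hd0 ((hE.continuous_deriv (by exact_mod_cast (by omega : 1 ≤ n))).sub continuous_const)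
      (by simp) (H / (∏ i ∈ Finset.range (n-1), (δ + i + 1))) (1/β) (by linarith) key1 x
    refine hbound.trans (le_of_eq ?_)
    have hprod : P = (∏ i ∈ Finset.range (n-1), (δ + i + 1)) * (δ + ((n-1:ℕ):ℝ) + 1) := by
      rw [hPQ, show n = (n - 1) + 1 from by omega, Finset.prod_range_succ]
      norm_num [show (n-1)+1 = n from by omega]
    have hlast : δ + ((n-1:ℕ):ℝ) + 1 = 1/β + 1 := by
      push_cast [Nat.cast_sub (by omega : 1 ≤ n)]
      linarith
    rw [hprod, hlast, div_mul_eq_mul_div, div_div, div_mul_eq_mul_div,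
      show 1/β + 1 = 1 + 1/β from by ring]
  -- setup
  obtain ⟨a, ha_def⟩ : ∃ a : ℝ, a = 1 - deriv E 0 := ⟨_, rfl⟩
  rw [← ha_def] at hT hy
  have ha : 0 < a := by rw [ha_def]; linarith
  have haT : a * Tstar = 1 := by rw [hT]; field_simp
  have hay : a * ystar = E 0 := by rw [hy]; field_simp
  have hp0' : (0:ℝ) < 1 + 1/β := by linarith
  obtain ⟨p, hp_def⟩ : ∃ p : ℝ, p = 1 + 1/β := ⟨_, rfl⟩
  rw [← hp_def] at keyR
  obtain ⟨q, hq_def⟩ : ∃ q : ℝ, q = β/(β+1) := ⟨_, rfl⟩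
  have hq0 : 0 < q := by rw [hq_def]; exact div_pos hβ0 (by linarith)
  have hpq : p * q = 1 := by rw [hp_def, hq_def]; field_simp
  have hHPn : (0:ℝ) ≤ H/P := div_nonneg hH0 hPpos.le
  have hHP : H / P < C := (div_lt_iff₀ hPpos).mpr (by linarith)
  have hCHm : 0 < C - H/P := by linarith
  have hCHp : 0 < C + H/P := by linarith
  have habs_p : ∀ x : ℝ, |x| * |x| ^ (1/β) = |x| ^ p := by
    intro x
    rw [hp_def, Real.rpow_add' (abs_nonneg x) (by positivity : (1:ℝ) + 1/β ≠ 0), Real.rpow_one]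
  obtain ⟨G, hGdef⟩ : ∃ G : ℝ → ℝ, ∀ x, G x = x + Tstar * w₀ x := ⟨_, fun _ => rfl⟩
  have hGid : ∀ x : ℝ, a * (G x - ystar) =
      C * (x * |x| ^ (1/β)) + (E x - E 0 - deriv E 0 * x) := by
    intro x
    rw [hGdef x]
    calc a * (x + Tstar * w₀ x - ystar) = a * x + (a * Tstar) * w₀ x - a * ystar := by ring
      _ = a * x + w₀ x - E 0 := by rw [haT, hay]; ring
      _ = _ := by rw [hw₀ x, ha_def]; ring
  -- sign and magnitude
  have hmag : ∀ x : ℝ, Real.sign (G x - ystar) = Real.sign x ∧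
      (C - H/P) * |x| ^ p ≤ a * |G x - ystar| ∧
      a * |G x - ystar| ≤ (C + H/P) * |x| ^ p := by
    intro x
    have hid := hGid x
    have hRx := keyR x
    rcases lt_trichotomy x 0 with hx | hx | hx
    · have hxp : x * |x| ^ (1/β) = -(|x| ^ p) := by
        rw [← habs_p x, abs_of_neg hx]; ring
      rw [hxp] at hid
      have habs : (0:ℝ) < |x| ^ p := Real.rpow_pos_of_pos (abs_pos.mpr (ne_of_lt hx)) _
      have hr1 := (abs_le.mp hRx).1
      have hr2 := (abs_le.mp hRx).2
      have hneg : a * (G x - ystar) ≤ -((C - H/P) * |x| ^ p) := by linarith [hid, hr2]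
      have hlt : G x - ystar < 0 := by
        by_contra hcon
        push_neg at hcon
        have h7 := mul_nonneg ha.le hcon
        have h8 := mul_pos hCHm habs
        linarith
      refine ⟨by rw [Real.sign_of_neg hlt, Real.sign_of_neg hx], ?_, ?_⟩
      · rw [abs_of_neg hlt, mul_neg]; linarith [hid, hr1, hr2]
      · rw [abs_of_neg hlt, mul_neg]; linarith [hid, hr1, hr2]
    · subst hx
      have h0 : G 0 - ystar = 0 := by
        have h1 : a * (G 0 - ystar) = 0 := by rw [hid]; norm_num
        exact (mul_eq_zero.mp h1).resolve_left (ne_of_gt ha)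
      have h2 : |(0:ℝ)| ^ p = 0 := by
        rw [abs_zero, Real.zero_rpow (by rw [hp_def]; positivity)]
      rw [h0, h2]
      norm_num
    · have hxp : x * |x| ^ (1/β) = |x| ^ p := by
        rw [← habs_p x, abs_of_pos hx]
      rw [hxp] at hid
      have habs : (0:ℝ) < |x| ^ p := Real.rpow_pos_of_pos (abs_pos.mpr (ne_of_gt hx)) _
      have hr1 := (abs_le.mp hRx).1
      have hr2 := (abs_le.mp hRx).2
      have hpos : (C - H/P) * |x| ^ p ≤ a * (G x - ystar) := by linarith [hid, hr1]
      have hlt : 0 < G x - ystar := by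
        by_contra hcon
        push_neg at hcon
        have h7 : a * (G x - ystar) ≤ 0 := mul_nonpos_of_nonneg_of_nonpos ha.le hcon
        have h8 := mul_pos hCHm habs
        linarith
      refine ⟨by rw [Real.sign_of_pos hlt, Real.sign_of_pos hx], ?_, ?_⟩
      · rw [abs_of_pos hlt]; linarith [hid, hr1, hr2]
      · rw [abs_of_pos hlt]; linarith [hid, hr1, hr2]
  -- continuity and strict monotonicity of G on each half line
  have hcontw : Continuous w₀ := by
    have h1 : Continuous (fun x : ℝ => |x| ^ (1/β)) :=
      continuous_abs.rpow_const (fun x => Or.inr (by positivity))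
    exact ((continuous_id.neg.add ((continuous_const.mul continuous_id).mul h1)).add
      hE.continuous).congr (fun x => (hw₀ x).symm)
  have hcontG : Continuous G :=
    (continuous_id.add (continuous_const.mul hcontw)).congr (fun x => (hGdef x).symm)
  have hTpos : 0 < Tstar := by rw [hT]; positivity
  have hP1 : (0:ℝ) < ∏ i ∈ Finset.range (n-1), (δ + i + 1) := hQpos _
  have hprodP : P = (∏ i ∈ Finset.range (n-1), (δ + i + 1)) * p := by
    rw [hPQ, show n = (n-1)+1 from by omega, Finset.prod_range_succ, hp_def]
    congr 1
    push_cast [Nat.cast_sub (by omega : 1 ≤ n), show (n-1)+1 = n from by omega]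
    linarith
  have hP1C : H / (∏ i ∈ Finset.range (n-1), (δ + i + 1)) < C * p := by
    rw [div_lt_iff₀ hP1]
    calc H < C * P := hHC
      _ = C * p * (∏ i ∈ Finset.range (n-1), (δ + i + 1)) := by rw [hprodP]; ring
  have hGder : ∀ x : ℝ, x ≠ 0 → HasDerivAt G
      (Tstar * ((deriv E x - deriv E 0) + C * ((1/β + 1) * |x| ^ (1/β)))) x := by
    intro x hx
    have hφ := hasDerivAt_mul_abs_rpow (1/β) (by positivity) hx
    have hw : HasDerivAt (fun t : ℝ => t + Tstar * (-t + C * t * |t| ^ (1/β) + E t))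
        (1 + Tstar * (-1 + C * ((1/β + 1) * |x| ^ (1/β)) + deriv E x)) x := by
      have h2 : HasDerivAt (fun t : ℝ => -t + C * t * |t| ^ (1/β) + E t)
          (-1 + C * ((1/β + 1) * |x| ^ (1/β)) + deriv E x) x := by
        have h3 := ((hasDerivAt_neg x).add ((hφ.const_mul C))).add (hEdiff x).hasDerivAt
        apply h3.congr_of_eventuallyEq
        filter_upwards with t
        simp only [Pi.add_apply]
        ring
      exact (hasDerivAt_id x).add (h2.const_mul Tstar)
    have hG' : HasDerivAt G (1 + Tstar * (-1 + C * ((1/β + 1) * |x| ^ (1/β)) + deriv E x)) x := by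
      apply hw.congr_of_eventuallyEq
      filter_upwards with t
      rw [hGdef t, hw₀ t]
    convert hG' using 1
    rw [ha_def] at haT
    linear_combination haT
  have hderpos : ∀ x : ℝ, x ≠ 0 → 0 < deriv G x := by
    intro x hx
    rw [(hGder x hx).deriv]
    have h1 := (abs_le.mp (key1 x)).1
    have h2 : (0:ℝ) < |x| ^ (1/β) := Real.rpow_pos_of_pos (abs_pos.mpr hx) _
    have h4 := mul_lt_mul_of_pos_right hP1C h2
    have h5 : (1:ℝ)/β + 1 = p := by rw [hp_def]; ring
    rw [h5]
    have h6 : 0 < (deriv E x - deriv E 0) + C * (p * |x| ^ (1/β)) := by linarith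
    exact mul_pos hTpos h6
  have hmono_pos : StrictMonoOn G (Set.Ici 0) := by
    apply strictMonoOn_of_deriv_pos (convex_Ici 0) hcontG.continuousOn
    intro x hx
    rw [interior_Ici] at hx
    exact hderpos x (ne_of_gt hx)
  have hmono_neg : StrictMonoOn G (Set.Iic 0) := by
    apply strictMonoOn_of_deriv_pos (convex_Iic 0) hcontG.continuousOn
    intro x hx
    rw [interior_Iic] at hx
    exact hderpos x (ne_of_lt hx)
  have hinj : ∀ x₁ x₂ : ℝ, x₁ ≠ 0 → G x₁ = G x₂ → x₁ = x₂ := by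
    intro x₁ x₂ hx1 heq
    have hs : Real.sign x₁ = Real.sign x₂ := by
      rw [← (hmag x₁).1, ← (hmag x₂).1, heq]
    rcases lt_trichotomy x₁ 0 with h1 | h1 | h1
    · have h2 : x₂ < 0 := by
        rcases lt_trichotomy x₂ 0 with h | h | h
        · exact h
        · rw [Real.sign_of_neg h1, h, Real.sign_zero] at hs; norm_num at hs
        · rw [Real.sign_of_neg h1, Real.sign_of_pos h] at hs; norm_num at hs
      exact hmono_neg.injOn (Set.mem_Iic.mpr h1.le) (Set.mem_Iic.mpr h2.le) heq
    · exact absurd h1 hx1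
    · have h2 : 0 < x₂ := by
        rcases lt_trichotomy x₂ 0 with h | h | h
        · rw [Real.sign_of_pos h1, Real.sign_of_neg h] at hs; norm_num at hs
        · rw [Real.sign_of_pos h1, h, Real.sign_zero] at hs; norm_num at hs
        · exact h
      exact hmono_pos.injOn (Set.mem_Ici.mpr h1.le) (Set.mem_Ici.mpr h2.le) heq
  -- the coefficient function
  obtain ⟨b, hb_def⟩ : ∃ b : ℝ → ℝ, ∀ y, b y =
      if h : ∃ x, x ≠ 0 ∧ G x = y then a * |h.choose| / |y - ystar| ^ q
      else a ^ (1+q) / (C + H/P) ^ q := ⟨_, fun _ => rfl⟩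
  have hbval : ∀ x : ℝ, x ≠ 0 → b (G x) = a * |x| / |G x - ystar| ^ q := by
    intro x hx
    have hex : ∃ x', x' ≠ 0 ∧ G x' = G x := ⟨x, hx, rfl⟩
    rw [hb_def (G x)]
    simp only [dif_pos hex]
    obtain ⟨h1, h2⟩ := hex.choose_spec
    rw [hinj _ _ h1 h2]
  have hexpq : (2*β+1)/(β+1) = 1 + q := by rw [hq_def]; field_simp; ring
  refine ⟨b, ?_, ?_⟩
  · intro x
    simp only [← hGdef, ← ha_def, ← hq_def]
    refine ⟨(hmag x).1, ?_⟩
    rcases eq_or_ne x 0 with rfl | hx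
    · have h0 : G 0 - ystar = 0 := by
        have hsx := (hmag 0).1
        rw [Real.sign_zero] at hsx
        exact Real.sign_eq_zero_iff.mp hsx
      rw [h0]
      norm_num
      rw [hw₀ 0]
      norm_num
    · have hsx := (hmag x).1
      have hGne : G x - ystar ≠ 0 := by
        intro h
        rw [h, Real.sign_zero] at hsx
        exact hx (Real.sign_eq_zero_iff.mp hsx.symm)
      have ht : 0 < |G x - ystar| ^ q := Real.rpow_pos_of_pos (abs_pos.mpr hGne) _
      rw [hbval x hx, hsx]
      have hw : w₀ x = a * (G x - x) := by
        rw [hGdef x, show a * (x + Tstar * w₀ x - x) = (a * Tstar) * w₀ x from by ring, haT,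
          one_mul]
      have hsgnabs : Real.sign x * (a * |x| / |G x - ystar| ^ q) * |G x - ystar| ^ q = a * x := by
        rw [show Real.sign x * (a * |x| / |G x - ystar| ^ q) * |G x - ystar| ^ q
          = Real.sign x * (a * |x|) * (|G x - ystar| ^ q / |G x - ystar| ^ q) from by ring,
          div_self (ne_of_gt ht), mul_one]
        rcases hx.lt_or_gt with h | h
        · rw [Real.sign_of_neg h, abs_of_neg h]; ring
        · rw [Real.sign_of_pos h, abs_of_pos h]; ring
      rw [hsgnabs, hw]
      linear_combination hay
  · intro y
    simp only [← ha_def, ← hq_def]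
    rw [hexpq]
    by_cases hex : ∃ x, x ≠ 0 ∧ G x = y
    · have hbv : b y = a * |hex.choose| / |y - ystar| ^ q := by
        rw [hb_def y]; simp only [dif_pos hex]
      obtain ⟨hx0, hxG⟩ := hex.choose_spec
      generalize hgen : hex.choose = x at hbv hx0 hxG
      have hm := hmag x
      rw [hxG] at hm
      obtain ⟨-, hm1, hm2⟩ := hm
      have hxpos : (0:ℝ) < |x| := abs_pos.mpr hx0
      have hxppos : (0:ℝ) < |x| ^ p := Real.rpow_pos_of_pos hxpos p
      have h1 : (C - H/P)/a * |x| ^ p ≤ |y - ystar| := by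
        rw [div_mul_eq_mul_div, div_le_iff₀ ha]
        linarith [hm1]
      have h2 : |y - ystar| ≤ (C + H/P)/a * |x| ^ p := by
        rw [div_mul_eq_mul_div, le_div_iff₀ ha]
        linarith [hm2]
      have hxppq : (|x| ^ p) ^ q = |x| := by
        rw [← Real.rpow_mul (abs_nonneg x), hpq, Real.rpow_one]
      have h1q : ((C - H/P)/a) ^ q * |x| ≤ |y - ystar| ^ q := by
        have h3 := Real.rpow_le_rpow (by positivity) h1 hq0.le
        rwa [Real.mul_rpow (by positivity) (by positivity), hxppq] at h3
      have h2q : |y - ystar| ^ q ≤ ((C + H/P)/a) ^ q * |x| := by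
        have h3 := Real.rpow_le_rpow (abs_nonneg _) h2 hq0.le
        rwa [Real.mul_rpow (by positivity) (by positivity), hxppq] at h3
      have htpos : 0 < |y - ystar| ^ q :=
        lt_of_lt_of_le (by positivity) h1q
      rw [hbv]
      have hcalc : ∀ c : ℝ, 0 < c → a ^ (1+q) / c ^ q * ((c/a) ^ q * |x|) = a * |x| := by
        intro c hc
        rw [Real.div_rpow hc.le ha.le, Real.rpow_add ha 1 q, Real.rpow_one]
        have hcq : (0:ℝ) < c ^ q := Real.rpow_pos_of_pos hc q
        have haq : (0:ℝ) < a ^ q := Real.rpow_pos_of_pos ha q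
        field_simp [hcq.ne', haq.ne']
      constructor
      · rw [le_div_iff₀ htpos]
        calc a ^ (1+q) / (C + H/P) ^ q * |y - ystar| ^ q
            ≤ a ^ (1+q) / (C + H/P) ^ q * (((C + H/P)/a) ^ q * |x|) := by
              have : (0:ℝ) ≤ a ^ (1+q) / (C + H/P) ^ q := by positivity
              exact mul_le_mul_of_nonneg_left h2q this
          _ = a * |x| := hcalc _ hCHp
      · rw [div_le_iff₀ htpos]
        calc a * |x| = a ^ (1+q) / (C - H/P) ^ q * (((C - H/P)/a) ^ q * |x|) :=
              (hcalc _ hCHm).symm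
          _ ≤ a ^ (1+q) / (C - H/P) ^ q * |y - ystar| ^ q := by
              have : (0:ℝ) ≤ a ^ (1+q) / (C - H/P) ^ q := by positivity
              exact mul_le_mul_of_nonneg_left h1q this
    · have hbv : b y = a ^ (1+q) / (C + H/P) ^ q := by
        rw [hb_def y]; simp only [dif_neg hex]
      rw [hbv]
      refine ⟨le_rfl, ?_⟩
      apply div_le_div_of_nonneg_left (by positivity) (by positivity)
      exact Real.rpow_le_rpow hCHm.le (by linarith) hq0.le
end

section
/- Let β > 0 and C > 0, and let W : ℝ → ℝ be the inverse of the strictly decreasing bijection G(W) = −W − C·W·|W|^{1/β} of ℝ, so that x = −W(x) − C·W(x)·|W(x)|^{1/β} for all x. Then W is continuously differentiable and satisfies the Burgers similarity equation −β·W(x) + (1 + β)·x·W'(x) + W(x)·W'(x) = 0 for all x ∈ ℝ. -/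
open Real

lemma abs_rpow_hasDerivAt {p : ℝ} (hp : 0 < p) (w : ℝ) :
    HasDerivAt (fun w : ℝ => w * |w| ^ p) ((1 + p) * |w| ^ p) w := by
  rcases lt_trichotomy w 0 with h | h | h
  · have h1 : HasDerivAt (fun w : ℝ => -((-w) ^ (p + 1))) ((1 + p) * |w| ^ p) w := by
      have h2 : HasDerivAt (fun w : ℝ => (-w) ^ (p + 1))
          ((p + 1) * (-w) ^ (p + 1 - 1) * (-1)) w :=
        (Real.hasDerivAt_rpow_const (x := -w) (p := p + 1)
          (Or.inl (by linarith))).comp w (hasDerivAt_neg w)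
      have : HasDerivAt (fun w : ℝ => -((-w) ^ (p + 1))) (-((p + 1) * (-w) ^ (p + 1 - 1) * (-1))) w := h2.neg
      convert this using 1
      rw [abs_of_neg h, add_sub_cancel_right]
      ring
    apply h1.congr_of_eventuallyEq
    filter_upwards [Iio_mem_nhds h] with y hy
    have hy' : (0:ℝ) < -y := by simpa using hy
    rw [Real.rpow_add hy' p 1, Real.rpow_one, abs_of_neg hy]
    ring
  · subst h
    have h0 : (1 + p) * |(0:ℝ)| ^ p = 0 := by
      simp [Real.zero_rpow hp.ne']
    rw [h0, hasDerivAt_iff_tendsto_slope]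
    have key : Filter.Tendsto (fun y : ℝ => |y| ^ p) (nhdsWithin 0 {(0:ℝ)}ᶜ) (nhds 0) := by
      have : ContinuousAt (fun y : ℝ => |y| ^ p) 0 :=
        (continuous_abs.rpow_const (fun x => Or.inr hp.le)).continuousAt
      have h4 := this.tendsto.mono_left (nhdsWithin_le_nhds (s := {(0:ℝ)}ᶜ))
      simpa [Real.zero_rpow hp.ne'] using h4
    apply key.congr'
    filter_upwards [self_mem_nhdsWithin] with y hy
    have hy0 : y ≠ 0 := hy
    simp [slope_def_field, hy0]

  · have h1 : HasDerivAt (fun w : ℝ => w ^ (p + 1)) ((1 + p) * |w| ^ p) w := by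
      have h2 := Real.hasDerivAt_rpow_const (x := w) (p := p + 1) (Or.inl h.ne')
      convert h2 using 1
      rw [abs_of_pos h, add_sub_cancel_right]
      ring
    apply h1.congr_of_eventuallyEq
    filter_upwards [Ioi_mem_nhds h] with y hy
    rw [Real.rpow_add hy p 1, Real.rpow_one, abs_of_pos hy]
    ring
/-- For `β > 0`, `C > 0`, the inverse `W` of the strictly
decreasing bijection `G W = -W - C·W·|W|^(1/β)`, i.e. the function satisfying
`x = -W x - C·W x·|W x|^(1/β)` for all `x`, is continuously differentiable and
solves the Burgers similarity equation
`-β·W + (1+β)·x·W' + W·W' = 0` on `ℝ`. -/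
theorem selfsimilar_profile_solves_similarity_eq (β C : ℝ) (hβ : 0 < β) (hC : 0 < C)
    (W : ℝ → ℝ) (hW : ∀ x : ℝ, x = -(W x) - C * W x * |W x| ^ (1/β)) :
    Differentiable ℝ W ∧ Continuous (deriv W) ∧
    (∀ x : ℝ, -β * W x + (1 + β) * x * deriv W x + W x * deriv W x = 0) := by
  set p : ℝ := 1/β with hpdef
  have hp : 0 < p := by positivity
  set G : ℝ → ℝ := fun w => -w - C * w * |w| ^ p with hGdef
  set D : ℝ → ℝ := fun w => -1 - C * ((1 + p) * |w| ^ p) with hDdef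
  have hGW : ∀ x, G (W x) = x := fun x => (hW x).symm
  have hGd : ∀ w, HasDerivAt G (D w) w := by
    intro w
    have h1 := ((abs_rpow_hasDerivAt hp w).const_mul C)
    have h2 : HasDerivAt (fun y : ℝ => -y - C * (y * |y| ^ p)) (-1 - C * ((1 + p) * |w| ^ p)) w := (hasDerivAt_neg w).sub h1
    simpa [hGdef, hDdef, mul_assoc, sub_eq_add_neg] using h2
  have hDneg : ∀ w, D w < 0 := by
    intro w
    have : 0 ≤ C * ((1 + p) * |w| ^ p) := by positivity
    simp only [hDdef]
    linarith
  have hDne : ∀ w, D w ≠ 0 := fun w => (hDneg w).ne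
  -- G is strictly antitone
  have hGanti : StrictAnti G := by
    apply strictAnti_of_deriv_neg
    intro x
    rw [(hGd x).deriv]
    exact hDneg x
  -- W is a strict anti bijection, hence continuous
  have hWinv : ∀ w, W (G w) = w := by
    intro w
    exact hGanti.injective (hGW (G w))
  have hWanti : StrictAnti W := by
    intro x y hxy
    rcases lt_trichotomy (W y) (W x) with h | h | h
    · exact h
    · exact absurd (by rw [← hGW x, ← hGW y, h]) hxy.ne
    · have := hGanti h
      rw [hGW x, hGW y] at this
      exact absurd hxy (not_lt.mpr this.le)
  have hWsurj : Function.Surjective W := fun w => ⟨G w, hWinv w⟩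
  have hWcont : Continuous W := by
    have hV : StrictMono (fun x => -(W x)) := fun a b hab => neg_lt_neg (hWanti hab)
    have hVsurj : Function.Surjective (fun x => -(W x)) := by
      intro y
      obtain ⟨x, hx⟩ := hWsurj (-y)
      exact ⟨x, by simp [hx]⟩
    have := (hV.orderIsoOfSurjective _ hVsurj).continuous
    have hWc : Continuous (fun x => -(-(W x))) := this.neg
    simpa using hWc
  have hWd : ∀ x, HasDerivAt W (D (W x))⁻¹ x := by
    intro x
    exact HasDerivAt.of_local_left_inverse hWcont.continuousAt (hGd (W x)) (hDne _)
      (Filter.Eventually.of_forall hGW)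
  have hderiv : deriv W = fun x => (D (W x))⁻¹ := funext fun x => (hWd x).deriv
  have hDcont : Continuous D := by
    have : Continuous (fun w : ℝ => |w| ^ p) :=
      continuous_abs.rpow_const (fun x => Or.inr hp.le)
    fun_prop
  refine ⟨fun x => (hWd x).differentiableAt, ?_, ?_⟩
  · rw [hderiv]
    exact (hDcont.comp hWcont).inv₀ (fun x => hDne _)
  · intro x
    rw [hderiv]
    obtain ⟨w, hw⟩ : ∃ w, W x = w := ⟨_, rfl⟩
    have hx : x = -w - C * w * |w| ^ p := by rw [← hw]; exact hW x
    simp only [hw]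
    rw [hx]
    simp only [hDdef]
    have hA : (0:ℝ) ≤ |w| ^ p := Real.rpow_nonneg (abs_nonneg w) p
    have hpβ : p * β = 1 := by
      rw [hpdef]; field_simp
    set A : ℝ := |w| ^ p with hA'
    have hD0 : -1 - C * ((1 + p) * A) ≠ 0 := by
      have : 0 ≤ C * ((1 + p) * A) := by positivity
      intro h; linarith [this]
    have hβ' : β * β⁻¹ = 1 := mul_inv_cancel₀ hβ.ne'
    have hX : (-1 - C * ((1 + p) * A)) * (-1 - C * ((1 + p) * A))⁻¹ = 1 := mul_inv_cancel₀ hD0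
    linear_combination (w * β) * hX + (w * C * A * (-1 - C * ((1 + p) * A))⁻¹) * hpβ
end

section
/- Let β > 0 and C > 0, and let W : ℝ → ℝ be the inverse of the strictly decreasing bijection G(W) = −W − C·W·|W|^{1/β} of ℝ. Then W has the asymptotics of a C^{β/(β+1)} cusp at infinity: the ratio (−sgn(x)·C^{−β/(β+1)}·|x|^{β/(β+1)}) / W(x) tends to 1 as x → +∞ and as x → −∞. -/
open Real Filter

private lemma ratio_eq_aux (β C : ℝ) (hβ : 0 < β) (hC : 0 < C) (x w : ℝ) (hw : w ≠ 0)
    (hx : x = -w - C * w * |w| ^ (1/β)) :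
    (-Real.sign x * C ^ (-(β/(β+1))) * |x| ^ (β/(β+1))) / w
      = (1 + (C * |w| ^ (1/β))⁻¹) ^ (β/(β+1)) := by
  set a := β/(β+1) with ha
  set t := |w| ^ (1/β) with htdef
  have hs : (0:ℝ) < |w| := abs_pos.2 hw
  have ht : 0 < t := Real.rpow_pos_of_pos hs _
  have hct : 0 < C * t := mul_pos hC ht
  have h1ct : (0:ℝ) < 1 + C * t := by linarith
  have hx' : x = -(w * (1 + C * t)) := by rw [hx]; ring
  have habs : |x| = |w| * (1 + C * t) := by
    rw [hx', abs_neg, abs_mul, abs_of_pos h1ct]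
  have hsign : Real.sign x = - Real.sign w := by
    rcases hw.lt_or_gt with h | h
    · have hxpos : 0 < x := by
        rw [hx']; nlinarith
      rw [Real.sign_of_pos hxpos, Real.sign_of_neg h]; ring
    · have hxneg : x < 0 := by
        rw [hx']; nlinarith
      rw [Real.sign_of_neg hxneg, Real.sign_of_pos h]
  have hsw : Real.sign w / w = |w|⁻¹ := by
    rcases hw.lt_or_gt with h | h
    · rw [Real.sign_of_neg h, abs_of_neg h]
      field_simp
    · rw [Real.sign_of_pos h, abs_of_pos h, one_div]
  rw [hsign, habs, neg_neg, Real.mul_rpow (abs_nonneg w) h1ct.le]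
  have hstep : Real.sign w * C ^ (-a) * (|w| ^ a * (1 + C * t) ^ a) / w
      = (Real.sign w / w) * (C ^ (-a) * |w| ^ a * (1 + C * t) ^ a) := by ring
  rw [hstep, hsw]
  have hpow1 : |w| ^ a * |w|⁻¹ = t ^ (-a) := by
    rw [← Real.rpow_neg_one |w|, ← Real.rpow_add hs]
    have hexp : a + (-1) = (1/β) * (-a) := by
      rw [ha]; field_simp; ring
    rw [hexp, Real.rpow_mul (abs_nonneg w), ← htdef]
  have hpow2 : C ^ (-a) * t ^ (-a) = (C * t) ^ (-a) :=
    (Real.mul_rpow hC.le ht.le).symm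
  have hbase : 1 + (C * t)⁻¹ = (1 + C * t) / (C * t) := by
    field_simp
    ring
  have hpow3 : (C * t) ^ (-a) * (1 + C * t) ^ a = (1 + (C * t)⁻¹) ^ a := by
    rw [hbase, Real.div_rpow h1ct.le hct.le, Real.rpow_neg hct.le]
    ring
  calc |w|⁻¹ * (C ^ (-a) * |w| ^ a * (1 + C * t) ^ a)
      = (C ^ (-a) * t ^ (-a)) * (1 + C * t) ^ a := by
        rw [← hpow1]; ring
    _ = (1 + (C * t)⁻¹) ^ a := by rw [hpow2, hpow3]

/-- For `β > 0`, `C > 0`, the inverse `W` of the strictly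
decreasing bijection `G W = -W - C·W·|W|^(1/β)` has the asymptotics of a
`C^{β/(β+1)}` cusp at infinity:
`(-sgn x · C^(-β/(β+1)) · |x|^(β/(β+1))) / W x → 1` as `x → ±∞`. -/
theorem selfsimilar_profile_asymptotics (β C : ℝ) (hβ : 0 < β) (hC : 0 < C)
    (W : ℝ → ℝ) (hW : ∀ x : ℝ, x = -(W x) - C * W x * |W x| ^ (1/β)) :
    Tendsto (fun x : ℝ =>
        (-Real.sign x * C ^ (-(β/(β+1))) * |x| ^ (β/(β+1))) / W x) atTop (nhds 1) ∧
    Tendsto (fun x : ℝ =>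
        (-Real.sign x * C ^ (-(β/(β+1))) * |x| ^ (β/(β+1))) / W x) atBot (nhds 1) := by
  set a := β/(β+1) with ha
  -- if W x = 0 then x = 0
  have hWne : ∀ x : ℝ, x ≠ 0 → W x ≠ 0 := by
    intro x hx h0
    apply hx
    have := hW x
    rw [h0] at this
    simpa using this
  -- lower bound on |W x| for large |x|
  have hlarge : ∀ M : ℝ, 0 ≤ M → ∀ x : ℝ, M + C * M * M ^ (1/β) < |x| → M ≤ |W x| := by
    intro M hM x hx
    by_contra h
    push_neg at h
    have hWeq := hW x
    set w := W x with hwdef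
    have hWnn : (0:ℝ) ≤ |w| := abs_nonneg _
    have ht : (0:ℝ) ≤ |w| ^ (1/β) := Real.rpow_nonneg hWnn _
    have h1ct : (0:ℝ) < 1 + C * |w| ^ (1/β) := by positivity
    have habs : |x| = |w| * (1 + C * |w| ^ (1/β)) := by
      have hx' : x = -(w * (1 + C * |w| ^ (1/β))) := by rw [hWeq]; ring
      rw [hx', abs_neg, abs_mul, abs_of_pos h1ct]
    have hle : |x| ≤ M + C * M * M ^ (1/β) := by
      rw [habs]
      have h1 : |w| ^ (1/β) ≤ M ^ (1/β) :=
        Real.rpow_le_rpow hWnn h.le (by positivity)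
      have h2 : |w| * (|w| ^ (1/β)) ≤ M * (M ^ (1/β)) :=
        mul_le_mul h.le h1 ht hM
      nlinarith
    linarith
  -- |W| tends to +∞ along atTop and atBot
  have hWtop : Tendsto (fun x => |W x|) atTop atTop := by
    rw [tendsto_atTop]
    intro M
    set M' := max M 0 with hM'
    have hM'0 : 0 ≤ M' := le_max_right _ _
    filter_upwards [eventually_ge_atTop (M' + C * M' * M' ^ (1/β) + 1)] with x hx
    have : M' + C * M' * M' ^ (1/β) < |x| := by
      have := le_abs_self x
      linarith
    exact le_trans (le_max_left _ _) (hlarge M' hM'0 x this)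
  have hWbot : Tendsto (fun x => |W x|) atBot atTop := by
    rw [tendsto_atTop]
    intro M
    set M' := max M 0 with hM'
    have hM'0 : 0 ≤ M' := le_max_right _ _
    filter_upwards [eventually_le_atBot (-(M' + C * M' * M' ^ (1/β) + 1))] with x hx
    have : M' + C * M' * M' ^ (1/β) < |x| := by
      have := neg_le_abs x
      linarith
    exact le_trans (le_max_left _ _) (hlarge M' hM'0 x this)
  -- the limit of the simplified expression
  have hcomp : Tendsto (fun s : ℝ => (1 + (C * s ^ (1/β))⁻¹) ^ a) atTop (nhds 1) := by
    have h1 : Tendsto (fun s : ℝ => C * s ^ (1/β)) atTop atTop :=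
      (tendsto_rpow_atTop (show (0:ℝ) < 1/β by positivity)).const_mul_atTop hC
    have h2 : Tendsto (fun s : ℝ => (C * s ^ (1/β))⁻¹) atTop (nhds 0) :=
      h1.inv_tendsto_atTop
    have h3 : Tendsto (fun s : ℝ => 1 + (C * s ^ (1/β))⁻¹) atTop (nhds 1) := by
      simpa using tendsto_const_nhds.add h2
    have h4 := h3.rpow_const (p := a) (Or.inl one_ne_zero)
    simpa using h4
  constructor
  · have hF : Tendsto (fun x : ℝ => (1 + (C * |W x| ^ (1/β))⁻¹) ^ a) atTop (nhds 1) :=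
      hcomp.comp hWtop
    refine hF.congr' ?_
    filter_upwards [eventually_ge_atTop (1:ℝ)] with x hx
    exact (ratio_eq_aux β C hβ hC x (W x) (hWne x (by linarith)) (hW x)).symm
  · have hF : Tendsto (fun x : ℝ => (1 + (C * |W x| ^ (1/β))⁻¹) ^ a) atBot (nhds 1) :=
      hcomp.comp hWbot
    refine hF.congr' ?_
    filter_upwards [eventually_le_atBot (-1:ℝ)] with x hx
    exact (ratio_eq_aux β C hβ hC x (W x) (hWne x (by linarith)) (hW x)).symm
end

section
/- Let β > 0 and C > 0, and let W : ℝ → ℝ be the inverse of the strictly decreasing bijection G(W) = −W − C·W·|W|^{1/β} of ℝ. Then near x = 0 the profile W agrees with −x + C·x·|x|^{1/β} to higher order: there exist x₀ > 0 and K > 0 such that for all |x| ≤ x₀, |W(x) − (−x + C·x·|x|^{1/β})| ≤ K·|x|^{1 + 2/β}. -/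
/-!
Put `p = 1/β` and `v = -W x`, so that `x = v + C v |v|^p`. The relation is odd, so one may take
`0 ≤ v ≤ x`; then the error is `C (x^(1+p) - v^(1+p))`. The tangent-line bound for the convex
function `t ↦ t^(1+p)` at `x` makes this at most `C (1+p) x^p (x - v) = C² (1+p) x^p v^(1+p)`,
and `v ≤ x` gives `C² (1+p) x^(1+2p)`, for every `x`.
-/

open Real

theorem Real.rpow_sub_rpow_le_mul_sub {q a b : ℝ} (hq : 1 ≤ q) (ha : 0 ≤ a) (hab : a ≤ b) :
    b ^ q - a ^ q ≤ q * b ^ (q - 1) * (b - a) := by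
  rcases hab.eq_or_lt with rfl | hlt
  · simp
  have hslope : slope (fun t : ℝ => t ^ q) a b ≤ q * b ^ (q - 1) :=
    (convexOn_rpow hq).slope_le_of_hasDerivAt ha (ha.trans hlt.le) hlt
      (hasDerivAt_rpow_const (Or.inr hq))
  rw [slope_def_field, div_le_iff₀ (sub_pos.mpr hlt)] at hslope
  exact hslope

theorem abs_sub_neg_add_mul_abs_rpow_le {p C w x : ℝ} (hp : 0 ≤ p) (hC : 0 ≤ C)
    (hx : x = -w - C * w * |w| ^ p) :
    |w - (-x + C * x * |x| ^ p)| ≤ C ^ 2 * (1 + p) * |x| ^ (1 + 2 * p) := by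
  wlog hw : w ≤ 0 generalizing w x
  · have h := this (w := -w) (x := -x) (by rw [hx, abs_neg]; ring) (by linarith)
    rwa [abs_neg, show -w - (- -x + C * -x * |x| ^ p) = -(w - (-x + C * x * |x| ^ p)) by ring,
      abs_neg] at h
  obtain ⟨v, rfl⟩ : ∃ v, w = -v := ⟨-w, (neg_neg w).symm⟩
  have hv : 0 ≤ v := neg_nonpos.mp hw
  have hpow : ∀ t : ℝ, 0 ≤ t → t * t ^ p = t ^ (1 + p) := fun t ht =>
    (rpow_one_add' ht (by linarith)).symm
  have hxv : x - v = C * v ^ (1 + p) := by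
    rw [hx, abs_neg, abs_of_nonneg hv, ← hpow v hv]; ring
  have hvx : v ≤ x := by nlinarith [rpow_nonneg hv (1 + p)]
  have hx0 : 0 ≤ x := hv.trans hvx
  have hmvt := rpow_sub_rpow_le_mul_sub (by linarith : 1 ≤ 1 + p) hv hvx
  rw [add_sub_cancel_left] at hmvt
  have hgrow : v ^ (1 + p) ≤ x ^ (1 + p) := rpow_le_rpow hv hvx (by linarith)
  calc |-v - (-x + C * x * |x| ^ p)| = C * (x ^ (1 + p) - v ^ (1 + p)) := by
        rw [abs_of_nonneg hx0, mul_assoc, hpow x hx0,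
          show -v - (-x + C * x ^ (1 + p)) = -(C * (x ^ (1 + p) - v ^ (1 + p))) by
            linear_combination hxv,
          abs_neg, abs_of_nonneg (mul_nonneg hC (sub_nonneg.mpr hgrow))]
    _ ≤ C * ((1 + p) * x ^ p * (C * v ^ (1 + p))) := by
        rw [← hxv]; exact mul_le_mul_of_nonneg_left hmvt hC
    _ ≤ C * ((1 + p) * x ^ p * (C * x ^ (1 + p))) := by gcongr
    _ = C ^ 2 * (1 + p) * |x| ^ (1 + 2 * p) := by
        rw [abs_of_nonneg hx0, show 1 + 2 * p = p + (1 + p) by ring,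
          rpow_add' (y := p) hx0 (by linarith)]
        ring

/-- For `β > 0`, `C > 0`, the inverse `W` of the strictly
decreasing bijection `G W = -W - C·W·|W|^(1/β)` agrees with
`-x + C·x·|x|^(1/β)` near `x = 0` to higher order: there are `x₀ > 0` and
`K > 0` with `|W x - (-x + C·x·|x|^(1/β))| ≤ K·|x|^(1+2/β)` for `|x| ≤ x₀`. -/
theorem selfsimilar_profile_near_zero (β C : ℝ) (hβ : 0 < β) (hC : 0 < C)
    (W : ℝ → ℝ) (hW : ∀ x : ℝ, x = -(W x) - C * W x * |W x| ^ (1/β)) :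
    ∃ x₀ > (0:ℝ), ∃ K > (0:ℝ), ∀ x : ℝ, |x| ≤ x₀ →
      |W x - (-x + C * x * |x| ^ (1/β))| ≤ K * |x| ^ (1 + 2/β) := by
  refine ⟨1, one_pos, C ^ 2 * (1 + 1/β), by positivity, fun x _ => ?_⟩
  have h := abs_sub_neg_add_mul_abs_rpow_le (by positivity) hC.le (hW x)
  rwa [show 1 + 2 * (1/β) = 1 + 2/β by ring] at h
end

section
/- Under the Riemann-variable Euler hypotheses, let ψ : ℝ × [0,T] → ℝ satisfy ψ(x,0) = x and ∂_t ψ(x,t) = λ₁(ψ(x,t), t) for all (x,t) (ψ is the flow of the slow acoustic speed λ₁). Then for all (x,t) ∈ ℝ × [0,T], σ(ψ(x,t), t) = σ(x,0) · exp(−α ∫₀ᵗ ∂_y w(ψ(x,s), s) ds). -/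
noncomputable section

open Set Real

/-- The Riemann-variable form of the 1D compressible Euler equations on
`ℝ × [0,T]` for a fixed parameter `α > 0`, with `γ := 2α + 1`.  The functions
`w, z, k` (dominant and subdominant Riemann variables, and entropy) are
continuously differentiable, with partial derivatives recorded by the fields
`wt = ∂ₜw, wy = ∂_y w`, etc.; the rescaled sound speed `σ := (w - z)/2` is
everywhere positive, and with `u := (w + z)/2` and wave speeds
`λ₁ = u - ασ`, `λ₂ = u`, `λ₃ = u + ασ` the system
`∂ₜw + λ₃∂_yw = (α/(2γ))σ²∂_yk`, `∂ₜz + λ₁∂_yz = (α/(2γ))σ²∂_yk`,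
`∂ₜk + λ₂∂_yk = 0` holds on `ℝ × [0,T]`. -/
structure EulerRV (α T : ℝ) where
  w : ℝ → ℝ → ℝ
  z : ℝ → ℝ → ℝ
  k : ℝ → ℝ → ℝ
  wt : ℝ → ℝ → ℝ
  wy : ℝ → ℝ → ℝ
  zt : ℝ → ℝ → ℝ
  zy : ℝ → ℝ → ℝ
  kt : ℝ → ℝ → ℝ
  ky : ℝ → ℝ → ℝ
  hwt : ∀ (y : ℝ), ∀ t ∈ Icc (0:ℝ) T,
    HasDerivWithinAt (fun s => w y s) (wt y t) (Icc (0:ℝ) T) t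
  hwy : ∀ (y : ℝ), ∀ t ∈ Icc (0:ℝ) T, HasDerivAt (fun x => w x t) (wy y t) y
  hzt : ∀ (y : ℝ), ∀ t ∈ Icc (0:ℝ) T,
    HasDerivWithinAt (fun s => z y s) (zt y t) (Icc (0:ℝ) T) t
  hzy : ∀ (y : ℝ), ∀ t ∈ Icc (0:ℝ) T, HasDerivAt (fun x => z x t) (zy y t) y
  hkt : ∀ (y : ℝ), ∀ t ∈ Icc (0:ℝ) T,
    HasDerivWithinAt (fun s => k y s) (kt y t) (Icc (0:ℝ) T) t
  hky : ∀ (y : ℝ), ∀ t ∈ Icc (0:ℝ) T, HasDerivAt (fun x => k x t) (ky y t) y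
  cont_w : ContinuousOn (fun p : ℝ × ℝ => w p.1 p.2) (univ ×ˢ Icc (0:ℝ) T)
  cont_z : ContinuousOn (fun p : ℝ × ℝ => z p.1 p.2) (univ ×ˢ Icc (0:ℝ) T)
  cont_k : ContinuousOn (fun p : ℝ × ℝ => k p.1 p.2) (univ ×ˢ Icc (0:ℝ) T)
  cont_wt : ContinuousOn (fun p : ℝ × ℝ => wt p.1 p.2) (univ ×ˢ Icc (0:ℝ) T)
  cont_wy : ContinuousOn (fun p : ℝ × ℝ => wy p.1 p.2) (univ ×ˢ Icc (0:ℝ) T)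
  cont_zt : ContinuousOn (fun p : ℝ × ℝ => zt p.1 p.2) (univ ×ˢ Icc (0:ℝ) T)
  cont_zy : ContinuousOn (fun p : ℝ × ℝ => zy p.1 p.2) (univ ×ˢ Icc (0:ℝ) T)
  cont_kt : ContinuousOn (fun p : ℝ × ℝ => kt p.1 p.2) (univ ×ˢ Icc (0:ℝ) T)
  cont_ky : ContinuousOn (fun p : ℝ × ℝ => ky p.1 p.2) (univ ×ˢ Icc (0:ℝ) T)
  sigma_pos : ∀ (y : ℝ), ∀ t ∈ Icc (0:ℝ) T, 0 < (w y t - z y t) / 2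
  pde_w : ∀ (y : ℝ), ∀ t ∈ Icc (0:ℝ) T,
    wt y t + ((w y t + z y t) / 2 + α * ((w y t - z y t) / 2)) * wy y t
      = α / (2 * (2 * α + 1)) * ((w y t - z y t) / 2) ^ 2 * ky y t
  pde_z : ∀ (y : ℝ), ∀ t ∈ Icc (0:ℝ) T,
    zt y t + ((w y t + z y t) / 2 - α * ((w y t - z y t) / 2)) * zy y t
      = α / (2 * (2 * α + 1)) * ((w y t - z y t) / 2) ^ 2 * ky y t
  pde_k : ∀ (y : ℝ), ∀ t ∈ Icc (0:ℝ) T,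
    kt y t + ((w y t + z y t) / 2) * ky y t = 0

namespace EulerRV

variable {α T : ℝ}

/-- The (rescaled) sound speed `σ = (w - z)/2`. -/
def sg (e : EulerRV α T) (y t : ℝ) : ℝ := (e.w y t - e.z y t) / 2

/-- The fluid velocity `u = (w + z)/2`. -/
def vel (e : EulerRV α T) (y t : ℝ) : ℝ := (e.w y t + e.z y t) / 2

/-- The slow acoustic wave speed `λ₁ = u - ασ`. -/
def lam1 (e : EulerRV α T) (y t : ℝ) : ℝ := e.vel y t - α * e.sg y t

/-- The material wave speed `λ₂ = u`. -/
def lam2 (e : EulerRV α T) (y t : ℝ) : ℝ := e.vel y t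

/-- The fast acoustic wave speed `λ₃ = u + ασ`. -/
def lam3 (e : EulerRV α T) (y t : ℝ) : ℝ := e.vel y t + α * e.sg y t

end EulerRV

open Filter Topology

/-- Chain rule along a curve for a function of two variables with continuous
partial derivative in the first variable. -/
lemma chain_along_curve {T : ℝ} (F Fy Ft : ℝ → ℝ → ℝ)
    (hFy : ∀ y : ℝ, ∀ t ∈ Icc (0:ℝ) T, HasDerivAt (fun x => F x t) (Fy y t) y)
    (hFt : ∀ y : ℝ, ∀ t ∈ Icc (0:ℝ) T,
      HasDerivWithinAt (fun s => F y s) (Ft y t) (Icc (0:ℝ) T) t)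
    (hcFy : ContinuousOn (fun p : ℝ × ℝ => Fy p.1 p.2) (univ ×ˢ Icc (0:ℝ) T))
    {φ : ℝ → ℝ} {v s : ℝ} (hs : s ∈ Icc (0:ℝ) T)
    (hφ : HasDerivWithinAt φ v (Icc (0:ℝ) T) s) :
    HasDerivWithinAt (fun r => F (φ r) r) (Fy (φ s) s * v + Ft (φ s) s)
      (Icc (0:ℝ) T) s := by
  have key : ∀ r ∈ Icc (0:ℝ) T, ∃ c : ℝ,
      F (φ r) r - F (φ s) r = Fy c r * (φ r - φ s) ∧ |c - φ s| ≤ |φ r - φ s| := by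
    intro r hr
    rcases lt_trichotomy (φ s) (φ r) with h | h | h
    · obtain ⟨c, hc, hc2⟩ := exists_hasDerivAt_eq_slope (fun x => F x r)
        (fun x => Fy x r) h
        (fun x _ => (hFy x r hr).continuousAt.continuousWithinAt)
        (fun x _ => hFy x r hr)
      refine ⟨c, ?_, ?_⟩
      · rw [hc2, div_mul_cancel₀]
        exact sub_ne_zero.2 (ne_of_gt h)
      · rw [abs_of_pos (by linarith [hc.1] : (0:ℝ) < c - φ s),
          abs_of_pos (by linarith : (0:ℝ) < φ r - φ s)]
        linarith [hc.2]
    · exact ⟨φ s, by simp [← h], by simp [← h]⟩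
    · obtain ⟨c, hc, hc2⟩ := exists_hasDerivAt_eq_slope (fun x => F x r)
        (fun x => Fy x r) h
        (fun x _ => (hFy x r hr).continuousAt.continuousWithinAt)
        (fun x _ => hFy x r hr)
      refine ⟨c, ?_, ?_⟩
      · have hne : φ s - φ r ≠ 0 := sub_ne_zero.2 (ne_of_gt h)
        rw [hc2]
        field_simp
        ring
      · rw [abs_of_neg (by linarith [hc.2] : c - φ s < 0),
          abs_of_neg (by linarith : φ r - φ s < 0)]
        linarith [hc.1]
  choose! ξ hξ1 hξ2 using key
  rw [hasDerivWithinAt_iff_tendsto_slope]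
  have hφc : Tendsto φ (𝓝[Icc (0:ℝ) T \ {s}] s) (𝓝 (φ s)) :=
    hφ.continuousWithinAt.tendsto.mono_left (nhdsWithin_mono _ diff_subset)
  have hξtend : Tendsto ξ (𝓝[Icc (0:ℝ) T \ {s}] s) (𝓝 (φ s)) := by
    rw [tendsto_iff_dist_tendsto_zero]
    refine squeeze_zero' (Eventually.of_forall fun r => dist_nonneg) ?_
      (tendsto_iff_dist_tendsto_zero.mp hφc)
    filter_upwards [self_mem_nhdsWithin] with r hr
    simpa [Real.dist_eq] using hξ2 r hr.1
  have hFyt : Tendsto (fun r => Fy (ξ r) r) (𝓝[Icc (0:ℝ) T \ {s}] s)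
      (𝓝 (Fy (φ s) s)) := by
    have hc : Tendsto (fun p : ℝ × ℝ => Fy p.1 p.2)
        (𝓝[univ ×ˢ Icc (0:ℝ) T] ((φ s), s)) (𝓝 (Fy (φ s) s)) :=
      (hcFy ((φ s), s) (by simp [hs])).tendsto
    have hpair : Tendsto (fun r => (ξ r, r)) (𝓝[Icc (0:ℝ) T \ {s}] s)
        (𝓝[univ ×ˢ Icc (0:ℝ) T] ((φ s), s)) := by
      rw [tendsto_nhdsWithin_iff]
      refine ⟨hξtend.prodMk_nhds (tendsto_id.mono_left nhdsWithin_le_nhds), ?_⟩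
      filter_upwards [self_mem_nhdsWithin] with r hr
      exact ⟨mem_univ _, hr.1⟩
    exact hc.comp hpair
  have hslopeφ : Tendsto (slope φ s) (𝓝[Icc (0:ℝ) T \ {s}] s) (𝓝 v) :=
    hasDerivWithinAt_iff_tendsto_slope.mp hφ
  have hslopet : Tendsto (slope (fun r => F (φ s) r) s) (𝓝[Icc (0:ℝ) T \ {s}] s)
      (𝓝 (Ft (φ s) s)) :=
    hasDerivWithinAt_iff_tendsto_slope.mp (hFt (φ s) s hs)
  have hT : Tendsto (fun r => Fy (ξ r) r * slope φ s r
      + slope (fun r => F (φ s) r) s r) (𝓝[Icc (0:ℝ) T \ {s}] s)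
      (𝓝 (Fy (φ s) s * v + Ft (φ s) s)) := (hFyt.mul hslopeφ).add hslopet
  refine hT.congr' ?_
  filter_upwards [self_mem_nhdsWithin] with r hr
  have h1 := hξ1 r hr.1
  have hkey : F (φ r) r - F (φ s) s
      = Fy (ξ r) r * (φ r - φ s) + (F (φ s) r - F (φ s) s) := by linarith
  simp only [slope_def_field]
  rw [hkey]
  ring

/-- Along the flow `ψ` of the slow acoustic speed `λ₁`, the
sound speed satisfies
`σ(ψ(x,t),t) = σ(x,0)·exp(-α ∫₀ᵗ ∂_y w(ψ(x,s),s) ds)`. -/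
theorem euler_sound_speed_along_slow_characteristic
    {α T : ℝ} (hα : 0 < α) (hT : 0 < T) (e : EulerRV α T)
    (ψ : ℝ → ℝ → ℝ) (hψ0 : ∀ x : ℝ, ψ x 0 = x)
    (hψ : ∀ (x : ℝ), ∀ t ∈ Set.Icc (0:ℝ) T,
      HasDerivWithinAt (fun s => ψ x s) (e.lam1 (ψ x t) t) (Set.Icc (0:ℝ) T) t) :
    ∀ (x : ℝ), ∀ t ∈ Set.Icc (0:ℝ) T,
      e.sg (ψ x t) t
        = e.sg x 0 * Real.exp (-α * ∫ s in (0:ℝ)..t, e.wy (ψ x s) s) := by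
  intro x
  have hψcont : ContinuousOn (ψ x) (Icc 0 T) :=
    fun s hs => (hψ x s hs).continuousWithinAt
  set f : ℝ → ℝ := fun s => e.sg (ψ x s) s with hfdef
  set g : ℝ → ℝ := fun s => e.wy (ψ x s) s with hgdef
  have hgcont : ContinuousOn g (Icc 0 T) := by
    have : ContinuousOn (fun s : ℝ => (ψ x s, s)) (Icc 0 T) :=
      hψcont.prodMk continuousOn_id
    exact e.cont_wy.comp this fun s hs => ⟨mem_univ _, hs⟩
  -- the ODE satisfied by f along the characteristic
  have hfd : ∀ s ∈ Icc (0:ℝ) T,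
      HasDerivWithinAt f (-α * g s * f s) (Icc (0:ℝ) T) s := by
    intro s hs
    have h := chain_along_curve (fun y t => e.sg y t)
      (fun y t => (e.wy y t - e.zy y t) / 2)
      (fun y t => (e.wt y t - e.zt y t) / 2)
      (fun y t ht => by
        simpa [EulerRV.sg, sub_div] using
          ((e.hwy y t ht).sub (e.hzy y t ht)).div_const 2)
      (fun y t ht => by
        simpa [EulerRV.sg, sub_div] using
          ((e.hwt y t ht).sub (e.hzt y t ht)).div_const 2)
      (by exact (e.cont_wy.sub e.cont_zy).div_const 2)
      hs (hψ x s hs)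
    have heq : (e.wy (ψ x s) s - e.zy (ψ x s) s) / 2 * e.lam1 (ψ x s) s
        + (e.wt (ψ x s) s - e.zt (ψ x s) s) / 2 = -α * g s * f s := by
      have hw := e.pde_w (ψ x s) s hs
      have hz := e.pde_z (ψ x s) s hs
      simp only [hgdef, hfdef, EulerRV.lam1, EulerRV.vel, EulerRV.sg]
      linear_combination (1/2) * hw - (1/2) * hz
    exact heq ▸ h
  -- the integral of g and its derivative
  set G : ℝ → ℝ := fun s => ∫ r in (0:ℝ)..s, g r with hGdef
  have hGd : ∀ s ∈ Icc (0:ℝ) T, HasDerivWithinAt G (g s) (Icc (0:ℝ) T) s := by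
    intro s hs
    haveI : Fact (s ∈ Icc (0:ℝ) T) := ⟨hs⟩
    have hint : IntervalIntegrable g MeasureTheory.volume 0 s := by
      refine ContinuousOn.intervalIntegrable (hgcont.mono ?_)
      rw [uIcc_of_le hs.1]
      exact Icc_subset_Icc le_rfl hs.2
    exact intervalIntegral.integral_hasDerivWithinAt_right hint
      (hgcont.stronglyMeasurableAtFilter_nhdsWithin measurableSet_Icc s)
      (hgcont s hs)
  -- the product f · exp(α G) has zero derivative
  set h : ℝ → ℝ := fun s => f s * Real.exp (α * G s) with hhdef
  have hhd : ∀ s ∈ Icc (0:ℝ) T, HasDerivWithinAt h 0 (Icc (0:ℝ) T) s := by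
    intro s hs
    have hd := (hfd s hs).mul (((hGd s hs).const_mul α).exp)
    have h0 : -α * g s * f s * Real.exp (α * G s)
        + f s * (Real.exp (α * G s) * (α * g s)) = 0 := by ring
    exact h0 ▸ hd
  have hhcont : ContinuousOn h (Icc 0 T) :=
    fun s hs => (hhd s hs).continuousWithinAt
  have hconst : ∀ t ∈ Icc (0:ℝ) T, h t = h 0 := by
    refine constant_of_has_deriv_right_zero hhcont fun s hs => ?_
    exact (hhd s (Ico_subset_Icc_self hs)).mono_of_mem_nhdsWithin (Icc_mem_nhdsGE_of_mem hs)
  intro t ht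
  have hG0 : G 0 = 0 := by simp [hGdef]
  have hh0 : h 0 = e.sg x 0 := by
    simp [hhdef, hG0, hfdef, hψ0 x]
  have hc := hconst t ht
  rw [hh0] at hc
  have : f t = e.sg x 0 * Real.exp (-(α * G t)) := by
    have := congrArg (fun y => y * Real.exp (-(α * G t))) hc
    simpa [hhdef, mul_assoc, ← Real.exp_add] using this
  simpa [hfdef, hGdef, neg_mul] using this
end
end

section
/- Under the Riemann-variable Euler hypotheses, let φ : ℝ × [0,T] → ℝ be twice continuously differentiable with φ(x,0) = x and ∂_t φ(x,t) = λ₂(φ(x,t), t) for all (x,t) (φ is the flow of the material speed u). Then for all (x,t) ∈ ℝ × [0,T], ∂_x φ(x,t) = (σ(x,0) / σ(φ(x,t), t))^{1/α}. -/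
noncomputable section

open Set Real

/-- Total derivative from partial derivatives, one of which is continuous. -/
lemma hasFDerivWithinAt_of_partials {T : ℝ} {f ft fy : ℝ → ℝ → ℝ}
    (hft : ∀ y, ∀ t ∈ Icc (0:ℝ) T, HasDerivWithinAt (fun s => f y s) (ft y t) (Icc (0:ℝ) T) t)
    (hfy : ∀ y, ∀ t ∈ Icc (0:ℝ) T, HasDerivAt (fun x => f x t) (fy y t) y)
    (hcont : ContinuousOn (fun p : ℝ × ℝ => fy p.1 p.2) (univ ×ˢ Icc (0:ℝ) T))
    {p : ℝ × ℝ} (hp : p ∈ (univ ×ˢ Icc (0:ℝ) T : Set (ℝ × ℝ))) :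
    HasFDerivWithinAt (fun q : ℝ × ℝ => f q.1 q.2)
      ((fy p.1 p.2) • (ContinuousLinearMap.fst ℝ ℝ ℝ)
        + (ft p.1 p.2) • (ContinuousLinearMap.snd ℝ ℝ ℝ))
      (univ ×ˢ Icc (0:ℝ) T) p := by
  set s : Set (ℝ × ℝ) := univ ×ˢ Icc (0:ℝ) T with hs
  have hB : HasFDerivWithinAt (fun q : ℝ × ℝ => f p.1 q.2)
      ((ft p.1 p.2) • (ContinuousLinearMap.snd ℝ ℝ ℝ)) s p := by
    exact (hft p.1 p.2 hp.2).comp_hasFDerivWithinAt (t := Icc (0:ℝ) T) p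
      (hasFDerivAt_snd.hasFDerivWithinAt) (fun q (hq : q ∈ s) => hq.2)
  have hBo := HasFDerivWithinAt.isLittleO hB
  apply HasFDerivWithinAt.of_isLittleO
  have key : (fun q : ℝ × ℝ => f q.1 q.2 - f p.1 q.2 - fy p.1 p.2 * (q.1 - p.1))
      =o[nhdsWithin p s] fun q => q - p := by
    rw [Asymptotics.isLittleO_iff]
    intro ε hε
    obtain ⟨δ, hδ, hδ'⟩ := Metric.continuousWithinAt_iff.mp (hcont p hp) ε hε
    have hmem : Metric.ball p δ ∩ s ∈ nhdsWithin p s :=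
      Filter.inter_mem (mem_nhdsWithin_of_mem_nhds (Metric.ball_mem_nhds p hδ))
        self_mem_nhdsWithin
    filter_upwards [hmem] with q hq
    obtain ⟨hq1, hq2⟩ := hq
    have hqt : q.2 ∈ Icc (0:ℝ) T := hq2.2
    -- work on the ball in the y variable
    set C : Set ℝ := Metric.ball p.1 δ
    have hderiv : ∀ ξ ∈ C, HasDerivWithinAt
        (fun y => f y q.2 - fy p.1 p.2 * y) (fy ξ q.2 - fy p.1 p.2) C ξ := by
      intro ξ hξ
      have := ((hfy ξ q.2 hqt).sub ((hasDerivAt_id ξ).const_mul (fy p.1 p.2))).hasDerivWithinAt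
        (s := C)
      simp only [id_eq, mul_one] at this
      exact this
    have hbound : ∀ ξ ∈ C, ‖fy ξ q.2 - fy p.1 p.2‖ ≤ ε := by
      intro ξ hξ
      have hmems : ((ξ, q.2) : ℝ × ℝ) ∈ s := ⟨mem_univ _, hqt⟩
      have hq1' : dist q p < δ := Metric.mem_ball.mp hq1
      rw [Prod.dist_eq] at hq1'
      have hdist : dist ((ξ, q.2) : ℝ × ℝ) p < δ := by
        rw [Prod.dist_eq]
        exact max_lt (Metric.mem_ball.mp hξ)
          (lt_of_le_of_lt (le_max_right _ _) hq1')
      exact (le_of_lt (hδ' hmems hdist))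
    have hyC : q.1 ∈ C := by
      have hq1' : dist q p < δ := Metric.mem_ball.mp hq1
      rw [Prod.dist_eq] at hq1'
      exact Metric.mem_ball.2 (lt_of_le_of_lt (le_max_left _ _) hq1')
    have hpC : p.1 ∈ C := Metric.mem_ball_self hδ
    have := (convex_ball p.1 δ).norm_image_sub_le_of_norm_hasDerivWithin_le
      hderiv hbound hpC hyC
    have h1 : ‖q.1 - p.1‖ ≤ ‖q - p‖ := by
      simpa using norm_fst_le (q - p)
    calc ‖f q.1 q.2 - f p.1 q.2 - fy p.1 p.2 * (q.1 - p.1)‖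
        = ‖(f q.1 q.2 - fy p.1 p.2 * q.1) - (f p.1 q.2 - fy p.1 p.2 * p.1)‖ := by ring_nf
      _ ≤ ε * ‖q.1 - p.1‖ := this
      _ ≤ ε * ‖q - p‖ := by gcongr
  have := key.add hBo
  apply this.congr' _ (Filter.Eventually.of_forall fun _ => rfl)
  filter_upwards with q
  simp only [ContinuousLinearMap.add_apply, ContinuousLinearMap.smul_apply,
    ContinuousLinearMap.coe_fst', ContinuousLinearMap.coe_snd', smul_eq_mul,
    Prod.fst_sub, Prod.snd_sub]
  ring

/-- Along the (twice continuously differentiable) flow `φ` of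
the material speed `λ₂ = u`, one has `∂ₓφ(x,t) = (σ(x,0)/σ(φ(x,t),t))^(1/α)`. -/
theorem euler_phi_x_formula
    {α T : ℝ} (hα : 0 < α) (hT : 0 < T) (e : EulerRV α T)
    (φ : ℝ → ℝ → ℝ)
    (hreg : ContDiffOn ℝ 2 (fun p : ℝ × ℝ => φ p.1 p.2) (Set.univ ×ˢ Set.Icc (0:ℝ) T))
    (hφ0 : ∀ x : ℝ, φ x 0 = x)
    (hφ : ∀ (x : ℝ), ∀ t ∈ Set.Icc (0:ℝ) T,
      HasDerivWithinAt (fun s => φ x s) (e.lam2 (φ x t) t) (Set.Icc (0:ℝ) T) t) :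
    ∀ (x : ℝ), ∀ t ∈ Set.Icc (0:ℝ) T,
      deriv (fun x' => φ x' t) x = (e.sg x 0 / e.sg (φ x t) t) ^ (1/α) := by
  intro x
  set s : Set (ℝ × ℝ) := univ ×ˢ Icc (0:ℝ) T with hs_def
  have hsu : UniqueDiffOn ℝ s := uniqueDiffOn_univ.prod (uniqueDiffOn_Icc hT)
  have hIu : UniqueDiffOn ℝ (Icc (0:ℝ) T) := uniqueDiffOn_Icc hT
  set F : ℝ × ℝ → ℝ := fun p => φ p.1 p.2 with hF_def
  set f' : ℝ × ℝ → (ℝ × ℝ →L[ℝ] ℝ) := fderivWithin ℝ F s with hf'_def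
  set f'' : ℝ × ℝ → (ℝ × ℝ →L[ℝ] (ℝ × ℝ →L[ℝ] ℝ)) := fderivWithin ℝ f' s with hf''_def
  have hd1 : DifferentiableOn ℝ F s := hreg.differentiableOn (by norm_num)
  have hF' : ∀ p ∈ s, HasFDerivWithinAt F (f' p) s p := fun p hp =>
    (hd1 p hp).hasFDerivWithinAt
  have hd2 : ContDiffOn ℝ 1 f' s := hreg.fderivWithin hsu (by norm_num)
  have hF'' : ∀ p ∈ s, HasFDerivWithinAt f' (f'' p) s p := fun p hp =>
    ((hd2.differentiableOn (by norm_num)) p hp).hasFDerivWithinAt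
  -- the Jacobian J(x',t) = ∂ₓφ
  set Jf : ℝ → ℝ → ℝ := fun x' t => f' (x', t) (1, 0) with hJf_def
  -- horizontal derivative
  have hJ : ∀ (x' : ℝ), ∀ t ∈ Icc (0:ℝ) T,
      HasDerivAt (fun x'' => φ x'' t) (Jf x' t) x' := by
    intro x' t ht
    have hg : HasDerivWithinAt (fun x'' : ℝ => ((x'', t) : ℝ × ℝ)) ((1:ℝ), (0:ℝ)) univ x' :=
      ((hasDerivAt_id x').prodMk (hasDerivAt_const x' t)).hasDerivWithinAt
    have := (hF' (x', t) ⟨mem_univ _, ht⟩).comp_hasDerivWithinAt x'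
      (f := fun x'' : ℝ => ((x'', t) : ℝ × ℝ)) hg (fun q _ => ⟨mem_univ _, ht⟩)
    rw [hasDerivWithinAt_univ] at this
    exact this
  -- vertical derivative identifies f' (x',t) (0,1) with u(φ(x',t),t)
  have hU : ∀ (x' : ℝ), ∀ t ∈ Icc (0:ℝ) T,
      f' (x', t) ((0:ℝ), (1:ℝ)) = e.vel (φ x' t) t := by
    intro x' t ht
    have hg : HasDerivWithinAt (fun t' : ℝ => ((x', t') : ℝ × ℝ)) ((0:ℝ), (1:ℝ))
        (Icc (0:ℝ) T) t :=
      ((hasDerivAt_const t x').prodMk (hasDerivAt_id t)).hasDerivWithinAt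
    have h1 : HasDerivWithinAt (fun t' => φ x' t') (f' (x', t) ((0:ℝ), (1:ℝ)))
        (Icc (0:ℝ) T) t :=
      (hF' (x', t) ⟨mem_univ _, ht⟩).comp_hasDerivWithinAt t
        (f := fun t' : ℝ => ((x', t') : ℝ × ℝ)) hg (fun q hq => ⟨mem_univ _, hq⟩)
    have h2 := hφ x' t ht
    have := h1.derivWithin (hIu t ht)
    rw [← this, h2.derivWithin (hIu t ht)]
    rfl
  -- time derivative of the Jacobian via second derivatives
  have hJt : ∀ t ∈ Icc (0:ℝ) T,
      HasDerivWithinAt (fun t' => Jf x t') (f'' (x, t) ((0:ℝ), (1:ℝ)) ((1:ℝ), (0:ℝ)))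
        (Icc (0:ℝ) T) t := by
    intro t ht
    have hg : HasDerivWithinAt (fun t' : ℝ => ((x, t') : ℝ × ℝ)) ((0:ℝ), (1:ℝ))
        (Icc (0:ℝ) T) t :=
      ((hasDerivAt_const t x).prodMk (hasDerivAt_id t)).hasDerivWithinAt
    have h2 : HasDerivWithinAt (fun t' => f' (x, t')) (f'' (x, t) ((0:ℝ), (1:ℝ)))
        (Icc (0:ℝ) T) t :=
      (hF'' (x, t) ⟨mem_univ _, ht⟩).comp_hasDerivWithinAt t
        (f := fun t' : ℝ => ((x, t') : ℝ × ℝ)) hg (fun q hq => ⟨mem_univ _, hq⟩)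
    have := h2.clm_apply (hasDerivWithinAt_const t _ (((1:ℝ), (0:ℝ)) : ℝ × ℝ))
    simpa using this
  -- symmetry of second derivative
  have hsymm : ∀ t ∈ Icc (0:ℝ) T,
      f'' (x, t) ((0:ℝ), (1:ℝ)) ((1:ℝ), (0:ℝ)) = f'' (x, t) ((1:ℝ), (0:ℝ)) ((0:ℝ), (1:ℝ)) := by
    intro t ht
    have hcl : ((x, t) : ℝ × ℝ) ∈ closure (interior s) := by
      rw [hs_def, interior_prod_eq, interior_univ, interior_Icc, closure_prod_eq,
        closure_univ, closure_Ioo hT.ne]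
      exact ⟨mem_univ _, ht⟩
    have := (hreg (x, t) ⟨mem_univ _, ht⟩).isSymmSndFDerivWithinAt minSmoothness_of_isRCLikeNormedField.le hsu hcl
      ⟨mem_univ _, ht⟩
    exact this ((0:ℝ), (1:ℝ)) ((1:ℝ), (0:ℝ))
  -- the cross derivative equals u_y(φ) * J
  have hcross : ∀ t ∈ Icc (0:ℝ) T,
      f'' (x, t) ((1:ℝ), (0:ℝ)) ((0:ℝ), (1:ℝ))
        = (e.wy (φ x t) t + e.zy (φ x t) t) / 2 * Jf x t := by
    intro t ht
    have hg : HasDerivWithinAt (fun x'' : ℝ => ((x'', t) : ℝ × ℝ)) ((1:ℝ), (0:ℝ)) univ x :=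
      ((hasDerivAt_id x).prodMk (hasDerivAt_const x t)).hasDerivWithinAt
    have h3 : HasDerivWithinAt (fun x' => f' (x', t)) (f'' (x, t) ((1:ℝ), (0:ℝ))) univ x :=
      (hF'' (x, t) ⟨mem_univ _, ht⟩).comp_hasDerivWithinAt x
        (f := fun x'' : ℝ => ((x'', t) : ℝ × ℝ)) hg (fun q _ => ⟨mem_univ _, ht⟩)
    rw [hasDerivWithinAt_univ] at h3
    have h4 : HasDerivAt (fun x' => f' (x', t) ((0:ℝ), (1:ℝ)))
        (f'' (x, t) ((1:ℝ), (0:ℝ)) ((0:ℝ), (1:ℝ))) x := by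
      have := h3.clm_apply (hasDerivAt_const x (((0:ℝ), (1:ℝ)) : ℝ × ℝ))
      simpa using this
    have h5 : (fun x' => f' (x', t) ((0:ℝ), (1:ℝ))) = fun x' => e.vel (φ x' t) t :=
      funext fun x' => hU x' t ht
    rw [h5] at h4
    have hw : HasDerivAt (fun x' => e.w (φ x' t) t) (e.wy (φ x t) t * Jf x t) x :=
      by have := (e.hwy (φ x t) t ht).comp x (hJ x t ht); exact this
    have hz : HasDerivAt (fun x' => e.z (φ x' t) t) (e.zy (φ x t) t * Jf x t) x :=
      by have := (e.hzy (φ x t) t ht).comp x (hJ x t ht); exact this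
    have h7 : HasDerivAt (fun x' => e.vel (φ x' t) t)
        ((e.wy (φ x t) t + e.zy (φ x t) t) / 2 * Jf x t) x := by
      have := (hw.add hz).div_const 2
      exact this.congr_deriv (by ring)
    exact h4.unique h7
  -- σ and u_y along the flow
  set S : ℝ → ℝ := fun t => e.sg (φ x t) t with hS_def
  set uy : ℝ → ℝ := fun t => (e.wy (φ x t) t + e.zy (φ x t) t) / 2 with huy_def
  have hSpos : ∀ t ∈ Icc (0:ℝ) T, 0 < S t := fun t ht => e.sigma_pos (φ x t) t ht
  -- derivative of σ along the flow
  have hS : ∀ t ∈ Icc (0:ℝ) T,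
      HasDerivWithinAt S (-(α * S t * uy t)) (Icc (0:ℝ) T) t := by
    intro t ht
    have hcurve : HasDerivWithinAt (fun t' : ℝ => ((φ x t', t') : ℝ × ℝ))
        ((e.vel (φ x t) t, (1:ℝ))) (Icc (0:ℝ) T) t :=
      (hφ x t ht).prodMk (hasDerivAt_id t).hasDerivWithinAt
    have hmaps : MapsTo (fun t' : ℝ => ((φ x t', t') : ℝ × ℝ)) (Icc (0:ℝ) T) s :=
      fun t' ht' => ⟨mem_univ _, ht'⟩
    have hWtot := hasFDerivWithinAt_of_partials e.hwt e.hwy e.cont_wy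
      (p := ((φ x t, t) : ℝ × ℝ)) ⟨mem_univ _, ht⟩
    have hZtot := hasFDerivWithinAt_of_partials e.hzt e.hzy e.cont_zy
      (p := ((φ x t, t) : ℝ × ℝ)) ⟨mem_univ _, ht⟩
    have hW : HasDerivWithinAt (fun t' => e.w (φ x t') t')
        (e.wy (φ x t) t * e.vel (φ x t) t + e.wt (φ x t) t) (Icc (0:ℝ) T) t := by
      have := hWtot.comp_hasDerivWithinAt t (f := fun t' : ℝ => ((φ x t', t') : ℝ × ℝ))
        hcurve hmaps
      simp at this
      exact this
    have hZ : HasDerivWithinAt (fun t' => e.z (φ x t') t')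
        (e.zy (φ x t) t * e.vel (φ x t) t + e.zt (φ x t) t) (Icc (0:ℝ) T) t := by
      have := hZtot.comp_hasDerivWithinAt t (f := fun t' : ℝ => ((φ x t', t') : ℝ × ℝ))
        hcurve hmaps
      simp at this
      exact this
    have hSd : HasDerivWithinAt S
        ((e.wy (φ x t) t * e.vel (φ x t) t + e.wt (φ x t) t
          - (e.zy (φ x t) t * e.vel (φ x t) t + e.zt (φ x t) t)) / 2) (Icc (0:ℝ) T) t :=
      (hW.sub hZ).div_const 2
    convert hSd using 1
    have hpw := e.pde_w (φ x t) t ht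
    have hpz := e.pde_z (φ x t) t ht
    simp only [hS_def, huy_def, EulerRV.sg, EulerRV.vel] at *
    linear_combination (-1/2 : ℝ) * hpw + (1/2 : ℝ) * hpz
  -- derivative of the Jacobian along the flow
  have hJ' : ∀ t ∈ Icc (0:ℝ) T,
      HasDerivWithinAt (fun t' => Jf x t') (uy t * Jf x t) (Icc (0:ℝ) T) t := by
    intro t ht
    have := hJt t ht
    rwa [hsymm t ht, hcross t ht] at this
  -- the conserved quantity
  set G : ℝ → ℝ := fun t => Jf x t * S t ^ (1/α) with hG_def
  have hG : ∀ t ∈ Icc (0:ℝ) T, HasDerivWithinAt G 0 (Icc (0:ℝ) T) t := by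
    intro t ht
    have hrp : HasDerivWithinAt (fun t' => S t' ^ (1/α))
        ((-(α * S t * uy t)) * (1/α) * S t ^ (1/α - 1)) (Icc (0:ℝ) T) t :=
      (hS t ht).rpow_const (Or.inl (hSpos t ht).ne')
    have := (hJ' t ht).mul hrp
    refine this.congr_deriv ?_
    have h1 : S t ^ ((1:ℝ)/α - 1) = S t ^ ((1:ℝ)/α) / S t :=
      Real.rpow_sub_one (hSpos t ht).ne' _
    rw [h1]
    have hα' : α ≠ 0 := hα.ne'
    have hSne : S t ≠ 0 := (hSpos t ht).ne'
    field_simp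
    ring
  -- conclude : G is constant
  have h0T : (0:ℝ) ∈ Icc (0:ℝ) T := ⟨le_refl 0, hT.le⟩
  have hconst : ∀ t ∈ Icc (0:ℝ) T, G t = G 0 := by
    intro t ht
    have := (convex_Icc (0:ℝ) T).norm_image_sub_le_of_norm_hasDerivWithin_le
      (f' := fun _ => (0:ℝ)) (C := 0) (fun t' ht' => hG t' ht') (fun t' _ => by simp) h0T ht
    have : ‖G t - G 0‖ ≤ 0 := by simpa using this
    have := norm_le_zero_iff.mp this
    linarith [sub_eq_zero.mp this]
  -- J(0) = 1
  have hJ0 : Jf x 0 = 1 := by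
    have h1 := hJ x 0 h0T
    have h2 : (fun x'' => φ x'' 0) = fun x'' : ℝ => x'' := funext hφ0
    rw [h2] at h1
    exact h1.unique (hasDerivAt_id x)
  -- S 0 = σ(x,0)
  have hS0 : S 0 = e.sg x 0 := by rw [hS_def]; simp [hφ0]
  -- finish
  intro t ht
  have hd := (hJ x t ht).deriv
  rw [hd]
  have hGt : Jf x t * S t ^ (1/α) = e.sg x 0 ^ (1/α) := by
    have := hconst t ht
    rw [hG_def] at this
    simpa [hJ0, hS0] using this
  have hStpos := hSpos t ht
  have hS0pos : (0:ℝ) < e.sg x 0 := by rw [← hS0]; exact hSpos 0 h0T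
  have hne : S t ^ ((1:ℝ)/α) ≠ 0 := (Real.rpow_pos_of_pos hStpos _).ne'
  rw [Real.div_rpow hS0pos.le hStpos.le]
  show Jf x t = e.sg x 0 ^ (1/α) / S t ^ (1/α)
  field_simp
  linarith [hGt]
end
end
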